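/- arXiv:2011.04326 — 16 statements merged into one kernel-verified Lean document; each statement's English description precedes it below -/
import Mathlib

section
/- For every integer a ≥ 1, the polynomial f_a(x) = x^3 - a x^2 - (a+3)x - 1 has three distinct real roots. -/
theorem simplest_cubic_three_distinct_real_roots (a : ℤ) (ha : 1 ≤ a) :
    ∃ ρ₁ ρ₂ ρ₃ : ℝ, ρ₁ < ρ₂ ∧ ρ₂ < ρ₃ ∧
      ρ₁^3 - a*ρ₁^2 - (a+3)*ρ₁ - 1 = 0 ∧
      ρ₂^3 - a*ρ₂^2 - (a+3)*ρ₂ - 1 = 0 ∧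
      ρ₃^3 - a*ρ₃^2 - (a+3)*ρ₃ - 1 = 0 := by
  have hA1 : (1:ℝ) ≤ (a:ℝ) := by exact_mod_cast ha
  set A : ℝ := (a : ℝ) with hA
  set g : ℝ → ℝ := fun x => x^3 - A*x^2 - (A+3)*x - 1 with hg
  have hc : Continuous g := by fun_prop
  have h2 : g (-2) < 0 := by simp only [hg]; nlinarith
  have hm1 : 0 < g (-1) := by simp only [hg]; nlinarith
  have h0 : g 0 < 0 := by simp only [hg]; norm_num
  have hP : 0 < g (A+2) := by simp only [hg]; nlinarith
  -- root in (-2, -1)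
  have r1 : (0:ℝ) ∈ g '' Set.Ioo (-2) (-1) := by
    apply intermediate_value_Ioo (by norm_num) hc.continuousOn
    exact ⟨h2, hm1⟩
  obtain ⟨ρ₁, hρ₁mem, hρ₁⟩ := r1
  -- root in (-1, 0)
  have r2 : (0:ℝ) ∈ g '' Set.Ioo (-1) 0 := by
    apply intermediate_value_Ioo' (by norm_num) hc.continuousOn
    exact ⟨h0, hm1⟩
  obtain ⟨ρ₂, hρ₂mem, hρ₂⟩ := r2
  -- root in (0, A+2)
  have r3 : (0:ℝ) ∈ g '' Set.Ioo 0 (A+2) := by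
    apply intermediate_value_Ioo (by linarith) hc.continuousOn
    exact ⟨h0, hP⟩
  obtain ⟨ρ₃, hρ₃mem, hρ₃⟩ := r3
  refine ⟨ρ₁, ρ₂, ρ₃, ?_, ?_, hρ₁, hρ₂, hρ₃⟩
  · exact lt_trans hρ₁mem.2 hρ₂mem.1
  · exact lt_trans hρ₂mem.2 hρ₃mem.1
end

section
/- If ρ is a real root of f_a(x) = x^3 - a x^2 - (a+3)x - 1 with ρ ≠ 0 and ρ ≠ -1, then -(1+ρ)/ρ and -1/(1+ρ) are also roots of f_a. -/
theorem simplest_cubic_root_relations (a : ℤ) (ha : 1 ≤ a) (ρ : ℝ)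
    (hρ : ρ^3 - a*ρ^2 - (a+3)*ρ - 1 = 0) (h0 : ρ ≠ 0) (h1 : ρ ≠ -1) :
    (-(1+ρ)/ρ)^3 - a*(-(1+ρ)/ρ)^2 - (a+3)*(-(1+ρ)/ρ) - 1 = 0 ∧
    (-1/(1+ρ))^3 - a*(-1/(1+ρ))^2 - (a+3)*(-1/(1+ρ)) - 1 = 0 := by
  have h1' : 1 + ρ ≠ 0 := fun h => h1 (by linarith)
  constructor
  · field_simp
    linear_combination hρ
  · field_simp
    linear_combination (-1 : ℝ) * hρ
end

section
/- For every integer a ≥ 34, f_a(a + 1 + 4/(2a+3) - 7/(2a^3)) < 0 and f_a(a + 1 + 4/(2a+3) - 3/a^3) > 0. -/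
theorem simplest_cubic_sign_change (a : ℤ) (ha : 34 ≤ a) :
    (((a:ℝ) + 1 + 4/(2*a+3) - 7/(2*a^3))^3 - a*((a:ℝ) + 1 + 4/(2*a+3) - 7/(2*a^3))^2
      - (a+3)*((a:ℝ) + 1 + 4/(2*a+3) - 7/(2*a^3)) - 1 < 0) ∧
    (0 < ((a:ℝ) + 1 + 4/(2*a+3) - 3/a^3)^3 - a*((a:ℝ) + 1 + 4/(2*a+3) - 3/a^3)^2
      - (a+3)*((a:ℝ) + 1 + 4/(2*a+3) - 3/a^3) - 1) := by
  set x : ℝ := (a : ℝ) with hxdef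
  have hx : (34:ℝ) ≤ x := by rw [hxdef]; exact_mod_cast ha
  have hx0 : (0:ℝ) < x := by linarith
  have h2 : (0:ℝ) < 2*x+3 := by linarith
  have hxne : x ≠ 0 := ne_of_gt hx0
  have h2ne : 2*x+3 ≠ 0 := ne_of_gt h2
  have hD : (0:ℝ) < 8*x^9*(2*x+3)^3 := by positivity
  have ht : (0:ℝ) ≤ x - 34 := by linarith
  have t1 : (0:ℝ) ≤ (x-34)^1 := pow_nonneg ht 1
  have t2 : (0:ℝ) ≤ (x-34)^2 := pow_nonneg ht 2
  have t3 : (0:ℝ) ≤ (x-34)^3 := pow_nonneg ht 3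
  have t4 : (0:ℝ) ≤ (x-34)^4 := pow_nonneg ht 4
  have t5 : (0:ℝ) ≤ (x-34)^5 := pow_nonneg ht 5
  have t6 : (0:ℝ) ≤ (x-34)^6 := pow_nonneg ht 6
  have t7 : (0:ℝ) ≤ (x-34)^7 := pow_nonneg ht 7
  have t8 : (0:ℝ) ≤ (x-34)^8 := pow_nonneg ht 8
  have t9 : (0:ℝ) ≤ (x-34)^9 := pow_nonneg ht 9
  have t10 : (0:ℝ) ≤ (x-34)^10 := pow_nonneg ht 10
  have t11 : (0:ℝ) ≤ (x-34)^11 := pow_nonneg ht 11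
  constructor
  · set E : ℝ := (x + 1 + 4/(2*x+3) - 7/(2*x^3))^3 - x*(x + 1 + 4/(2*x+3) - 7/(2*x^3))^2
      - (x+3)*(x + 1 + 4/(2*x+3) - 7/(2*x^3)) - 1 with hE
    have key : E * (8*x^9*(2*x+3)^3) =
        (-9261) + (-18522)*x^1 + (-12348)*x^2 + (15778)*x^3 + (35280)*x^4 + (25872)*x^5
        + (-672)*x^6 + (-15484)*x^7 + (-13356)*x^8 + (-5312)*x^9 + (-1008)*x^10 := by
      rw [hE]
      field_simp
      ring
    have hN : E * (8*x^9*(2*x+3)^3) < 0 := by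
      rw [key]; nlinarith [t1, t2, t3, t4, t5, t6, t7, t8, t9, t10]
    by_contra h
    push_neg at h
    have := mul_nonneg h (le_of_lt hD)
    linarith
  · set E : ℝ := (x + 1 + 4/(2*x+3) - 3/x^3)^3 - x*(x + 1 + 4/(2*x+3) - 3/x^3)^2
      - (x+3)*(x + 1 + 4/(2*x+3) - 3/x^3) - 1 with hE
    have key : E * (x^9*(2*x+3)^3) =
        (-729) + (-1458)*x^1 + (-972)*x^2 + (1485)*x^3 + (3240)*x^4 + (2376)*x^5
        + (-216)*x^6 + (-1683)*x^7 + (-1431)*x^8 + (-551)*x^9 + (-96)*x^10 + (4)*x^11 := by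
      rw [hE]
      field_simp
      ring
    have hN : 0 < E * (x^9*(2*x+3)^3) := by
      rw [key]; nlinarith [t1, t2, t3, t4, t5, t6, t7, t8, t9, t10, t11]
    have hD' : (0:ℝ) < x^9*(2*x+3)^3 := by positivity
    by_contra h
    push_neg at h
    have := mul_nonpos_of_nonpos_of_nonneg h (le_of_lt hD')
    linarith
end

section
/- For every integer a ≥ 34, the largest real root ρ₃ of f_a(x) = x^3 - a x^2 - (a+3)x - 1 satisfies a + 1 + 4/(2a+3) - 7/(2a^3) < ρ₃ < a + 1 + 4/(2a+3) - 3/a^3. -/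
set_option maxHeartbeats 1000000


theorem simplest_cubic_largest_root_bounds (a : ℤ) (ha : 34 ≤ a) (ρ₃ : ℝ)
    (hroot : ρ₃^3 - a*ρ₃^2 - (a+3)*ρ₃ - 1 = 0)
    (hmax : ∀ x : ℝ, x^3 - a*x^2 - (a+3)*x - 1 = 0 → x ≤ ρ₃) :
    (a:ℝ) + 1 + 4/(2*a+3) - 7/(2*a^3) < ρ₃ ∧ ρ₃ < (a:ℝ) + 1 + 4/(2*a+3) - 3/a^3 := by
  set A : ℝ := (a : ℝ) with hAdef
  have hA : (34:ℝ) ≤ A := by rw [hAdef]; exact_mod_cast ha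
  have h34 : (0:ℝ) ≤ A - 34 := by linarith
  have hA0 : (0:ℝ) < A := by linarith
  have h1 : (0:ℝ) < 2*A+3 := by linarith
  have h2 : (0:ℝ) < A^3 := by positivity
  have h1' : (2*A+3) ≠ 0 := ne_of_gt h1
  have hAne : A ≠ 0 := ne_of_gt hA0
  set L : ℝ := A + 1 + 4/(2*A+3) - 7/(2*A^3) with hLdef
  set U : ℝ := A + 1 + 4/(2*A+3) - 3/A^3 with hUdef
  have hD : (0:ℝ) < (2*A^3*(2*A+3))^3 := by positivity
  -- f(L) < 0
  have hfL : L^3 - A*L^2 - (A+3)*L - 1 < 0 := by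
    have key : (L^3 - A*L^2 - (A+3)*L - 1) * (2*A^3*(2*A+3))^3 =
        -1008*A^10 - 5312*A^9 - 13356*A^8 - 15484*A^7 - 672*A^6 + 25872*A^5
          + 35280*A^4 + 15778*A^3 - 12348*A^2 - 18522*A - 9261 := by
      rw [hLdef]; field_simp; ring
    have hPL : -1008*A^10 - 5312*A^9 - 13356*A^8 - 15484*A^7 - 672*A^6 + 25872*A^5
          + 35280*A^4 + 15778*A^3 - 12348*A^2 - 18522*A - 9261 < 0 := by
      linarith [pow_nonneg h34 1, pow_nonneg h34 2, pow_nonneg h34 3, pow_nonneg h34 4,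
        pow_nonneg h34 5, pow_nonneg h34 6, pow_nonneg h34 7, pow_nonneg h34 8,
        pow_nonneg h34 9, pow_nonneg h34 10]
    nlinarith [key, hPL, hD]
  -- f(U) > 0
  have hfU : 0 < U^3 - A*U^2 - (A+3)*U - 1 := by
    have key : (U^3 - A*U^2 - (A+3)*U - 1) * (A^3*(2*A+3))^3 =
        4*A^11 - 96*A^10 - 551*A^9 - 1431*A^8 - 1683*A^7 - 216*A^6 + 2376*A^5
          + 3240*A^4 + 1485*A^3 - 972*A^2 - 1458*A - 729 := by
      rw [hUdef]; field_simp; ring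
    have hD2 : (0:ℝ) < (A^3*(2*A+3))^3 := by positivity
    have hPU : 0 < 4*A^11 - 96*A^10 - 551*A^9 - 1431*A^8 - 1683*A^7 - 216*A^6 + 2376*A^5
          + 3240*A^4 + 1485*A^3 - 972*A^2 - 1458*A - 729 := by
      linarith [pow_nonneg h34 1, pow_nonneg h34 2, pow_nonneg h34 3, pow_nonneg h34 4,
        pow_nonneg h34 5, pow_nonneg h34 6, pow_nonneg h34 7, pow_nonneg h34 8,
        pow_nonneg h34 9, pow_nonneg h34 10, pow_nonneg h34 11]
    nlinarith [key, hPU, hD2]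
  -- L ≤ U
  have hLU : L ≤ U := by
    rw [hLdef, hUdef]
    have : 3/A^3 ≤ 7/(2*A^3) := by
      rw [div_le_div_iff₀ h2 (by positivity)]; nlinarith
    linarith
  -- A + 1 ≤ U
  have hU1 : A + 1 ≤ U := by
    rw [hUdef]
    have : 3/A^3 ≤ 4/(2*A+3) := by
      rw [div_le_div_iff₀ h2 h1]; nlinarith [mul_nonneg h34 (sq_nonneg A), mul_nonneg h34 hA0.le]
    linarith
  -- IVT : root r in [L,U]
  have hg : ContinuousOn (fun x : ℝ => x^3 - A*x^2 - (A+3)*x - 1) (Set.Icc L U) := by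
    fun_prop
  have hmem : (0:ℝ) ∈ Set.Icc (L^3 - A*L^2 - (A+3)*L - 1) (U^3 - A*U^2 - (A+3)*U - 1) :=
    ⟨le_of_lt hfL, le_of_lt hfU⟩
  obtain ⟨r, hrI, hr0⟩ := intermediate_value_Icc hLU hg hmem
  have hr0' : r^3 - A*r^2 - (A+3)*r - 1 = 0 := hr0
  have hrρ : r ≤ ρ₃ := hmax r hr0'
  have hLr : L < r := by
    rcases lt_or_eq_of_le hrI.1 with h | h
    · exact h
    · exfalso; rw [← h] at hr0'; linarith
  constructor
  · exact lt_of_lt_of_le hLr hrρ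
  · -- upper bound
    by_contra hcon
    push_neg at hcon  -- U ≤ ρ₃
    have hs : (0:ℝ) ≤ ρ₃ - U := by linarith
    have hu : (0:ℝ) ≤ U - (A+1) := by linarith
    have hA0' : (0:ℝ) ≤ A := le_of_lt hA0
    nlinarith [hroot, hfU, mul_nonneg hs hu, mul_nonneg hs hs,
      mul_nonneg (mul_nonneg hs hs) hs, mul_nonneg (mul_nonneg hs hs) hu,
      mul_nonneg (mul_nonneg hs hu) hu, mul_nonneg (mul_nonneg hs hu) hA0',
      mul_nonneg (mul_nonneg hs hs) hA0', mul_nonneg (mul_nonneg hs hA0') hA0',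
      mul_nonneg hs hA0']
end

section
/- For integers a ≥ 34 and 1 ≤ k ≤ a, the roots ρ₁ < ρ₂ < ρ₃ of f_a satisfy -k - 1 < kρ₁ < -k and k(a+1) < kρ₃ < k(a+1) + 2; moreover, if k ≤ a/2 then kρ₃ < k(a+1) + 1. -/
theorem simplest_cubic_dilated_root_bounds (a k : ℤ) (ha : 34 ≤ a)
    (hk1 : 1 ≤ k) (hka : k ≤ a) (ρ₁ ρ₂ ρ₃ : ℝ)
    (h12 : ρ₁ < ρ₂) (h23 : ρ₂ < ρ₃)
    (h1 : ρ₁^3 - a*ρ₁^2 - (a+3)*ρ₁ - 1 = 0)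
    (h2 : ρ₂^3 - a*ρ₂^2 - (a+3)*ρ₂ - 1 = 0)
    (h3 : ρ₃^3 - a*ρ₃^2 - (a+3)*ρ₃ - 1 = 0) :
    (-(k:ℝ) - 1 < k*ρ₁ ∧ (k:ℝ)*ρ₁ < -k) ∧
    ((k:ℝ)*(a+1) < k*ρ₃ ∧ (k:ℝ)*ρ₃ < k*(a+1) + 2) ∧
    (2*k ≤ a → (k:ℝ)*ρ₃ < k*(a+1) + 1) := by
  have haR : (34:ℝ) ≤ (a:ℝ) := by exact_mod_cast ha
  have hkR : (1:ℝ) ≤ (k:ℝ) := by exact_mod_cast hk1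
  have hkaR : (k:ℝ) ≤ (a:ℝ) := by exact_mod_cast hka
  have ha0 : (0:ℝ) < (a:ℝ) := by linarith
  have hk0 : (0:ℝ) < (k:ℝ) := by linarith
  have hia : (0:ℝ) < 1/(a:ℝ) := by positivity
  -- Vieta
  have hne12 : ρ₁ - ρ₂ ≠ 0 := sub_ne_zero.mpr (ne_of_lt h12)
  have hne23 : ρ₂ - ρ₃ ≠ 0 := sub_ne_zero.mpr (ne_of_lt h23)
  have hne13 : ρ₁ - ρ₃ ≠ 0 := sub_ne_zero.mpr (ne_of_lt (h12.trans h23))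
  have g12 : ρ₁^2 + ρ₁*ρ₂ + ρ₂^2 - a*(ρ₁+ρ₂) - (a+3) = 0 := by
    have h : (ρ₁ - ρ₂) * (ρ₁^2 + ρ₁*ρ₂ + ρ₂^2 - a*(ρ₁+ρ₂) - (a+3)) = 0 := by
      linear_combination h1 - h2
    rcases mul_eq_zero.mp h with h | h
    · exact absurd h hne12
    · exact h
  have g23 : ρ₂^2 + ρ₂*ρ₃ + ρ₃^2 - a*(ρ₂+ρ₃) - (a+3) = 0 := by
    have h : (ρ₂ - ρ₃) * (ρ₂^2 + ρ₂*ρ₃ + ρ₃^2 - a*(ρ₂+ρ₃) - (a+3)) = 0 := by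
      linear_combination h2 - h3
    rcases mul_eq_zero.mp h with h | h
    · exact absurd h hne23
    · exact h
  have e1 : ρ₁ + ρ₂ + ρ₃ = a := by
    have h : (ρ₁ - ρ₃) * (ρ₁ + ρ₂ + ρ₃ - a) = 0 := by linear_combination g12 - g23
    rcases mul_eq_zero.mp h with h | h
    · exact absurd h hne13
    · linarith [h]
  have e2 : ρ₁*ρ₂ + ρ₂*ρ₃ + ρ₃*ρ₁ = -((a:ℝ)+3) := by
    linear_combination (ρ₁ + ρ₂) * e1 - g12
  have e3 : ρ₁*ρ₂*ρ₃ = 1 := by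
    linear_combination h1 + ρ₁ * e2 - ρ₁^2 * e1
  have hfac : ∀ t : ℝ, (t - ρ₁) * (t - ρ₂) * (t - ρ₃)
      = t^3 - a*t^2 - (a+3)*t - 1 := by
    intro t
    linear_combination (-(t^2):ℝ) * e1 + t * e2 - e3
  -- sign facts at special points
  have hF1 : (-1 - ρ₁) * (-1 - ρ₂) * (-1 - ρ₃) = 1 := by
    have h := hfac (-1); rw [h]; ring
  have hFa1 : ((a:ℝ)+1 - ρ₁) * ((a:ℝ)+1 - ρ₂) * ((a:ℝ)+1 - ρ₃) = -(2*(a:ℝ)+3) := by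
    have h := hfac ((a:ℝ)+1); rw [h]; ring
  -- ρ₁ < -1
  have hρ1 : ρ₁ < -1 := by
    by_contra h
    push_neg at h
    have hp : (0:ℝ) < (ρ₂+1)*(ρ₃+1) :=
      mul_pos (by linarith) (by linarith)
    have hle := mul_nonpos_of_nonpos_of_nonneg
      (show -1 - ρ₁ ≤ 0 by linarith) hp.le
    have heq : (-1 - ρ₁) * (-1 - ρ₂) * (-1 - ρ₃)
        = (-1 - ρ₁) * ((ρ₂+1)*(ρ₃+1)) := by ring
    rw [heq] at hF1
    linarith
  -- -1 < ρ₂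
  have hρ2 : (-1:ℝ) < ρ₂ := by
    by_contra h
    push_neg at h
    have hp12 : (0:ℝ) < ρ₁ * ρ₂ := mul_pos_of_neg_of_neg (by linarith) (by linarith)
    have hρ3pos : (0:ℝ) < ρ₃ := by
      by_contra h3'
      push_neg at h3'
      have := mul_nonpos_of_nonneg_of_nonpos hp12.le h3'
      linarith [e3]
    have hq : (0:ℝ) ≤ (-1 - ρ₁) * (-1 - ρ₂) :=
      mul_nonneg (by linarith) (by linarith)
    have hle := mul_nonpos_of_nonneg_of_nonpos hq
      (show -1 - ρ₃ ≤ 0 by linarith)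
    linarith [hF1]
  -- a+1 < ρ₃
  have hρ3 : (a:ℝ) + 1 < ρ₃ := by
    by_contra h
    push_neg at h
    have hq : (0:ℝ) ≤ ((a:ℝ)+1 - ρ₁) * ((a:ℝ)+1 - ρ₂) :=
      mul_nonneg (by linarith) (by linarith)
    have hle := mul_nonneg hq (show (0:ℝ) ≤ (a:ℝ)+1 - ρ₃ by linarith)
    linarith [hFa1]
  -- ρ₂ < a+1
  have hρ2a : ρ₂ < (a:ℝ) + 1 := by
    by_contra h
    push_neg at h
    have hq : ((a:ℝ)+1 - ρ₁) * ((a:ℝ)+1 - ρ₂) ≤ 0 :=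
      mul_nonpos_of_nonneg_of_nonpos (by linarith) (by linarith)
    have hle := mul_nonneg (neg_nonneg.mpr hq)
      (neg_nonneg.mpr (show (a:ℝ)+1 - ρ₃ ≤ 0 by linarith))
    rw [neg_mul_neg] at hle
    linarith [hFa1]
  -- -1 - 1/a < ρ₁
  have hane : (a:ℝ) ≠ 0 := ne_of_gt ha0
  have hu : -1 - 1/(a:ℝ) < ρ₁ := by
    have hFu : (-1 - 1/(a:ℝ) - ρ₁) * (-1 - 1/(a:ℝ) - ρ₂) * (-1 - 1/(a:ℝ) - ρ₃) < 0 := by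
      rw [hfac (-1 - 1/(a:ℝ))]
      have hval : (-1 - 1/(a:ℝ))^3 - (a:ℝ)*(-1 - 1/(a:ℝ))^2
          - ((a:ℝ)+3)*(-1 - 1/(a:ℝ)) - 1
          = -(((a:ℝ)^2 + 3*(a:ℝ) + 1)/(a:ℝ)^3) := by
        field_simp
        ring
      rw [hval]
      have : (0:ℝ) < ((a:ℝ)^2 + 3*(a:ℝ) + 1)/(a:ℝ)^3 := by positivity
      linarith
    by_contra h
    push_neg at h
    have hu1 : -1 - 1/(a:ℝ) < -1 := by linarith
    have hq : (-1 - 1/(a:ℝ) - ρ₁) * (-1 - 1/(a:ℝ) - ρ₂) ≤ 0 :=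
      mul_nonpos_of_nonneg_of_nonpos (by linarith) (by linarith)
    have hle := mul_nonneg (neg_nonneg.mpr hq)
      (neg_nonneg.mpr (show -1 - 1/(a:ℝ) - ρ₃ ≤ 0 by linarith))
    rw [neg_mul_neg] at hle
    linarith
  -- ρ₃ < a+1+2/a
  have hv : ρ₃ < (a:ℝ) + 1 + 2/(a:ℝ) := by
    have hFv : (0:ℝ) < ((a:ℝ) + 1 + 2/(a:ℝ) - ρ₁) * ((a:ℝ) + 1 + 2/(a:ℝ) - ρ₂)
        * ((a:ℝ) + 1 + 2/(a:ℝ) - ρ₃) := by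
      rw [hfac ((a:ℝ) + 1 + 2/(a:ℝ))]
      have hval : ((a:ℝ) + 1 + 2/(a:ℝ))^3 - (a:ℝ)*((a:ℝ) + 1 + 2/(a:ℝ))^2
          - ((a:ℝ)+3)*((a:ℝ) + 1 + 2/(a:ℝ)) - 1
          = (3*(a:ℝ)^3 + 8*(a:ℝ)^2 + 12*(a:ℝ) + 8)/(a:ℝ)^3 := by
        field_simp
        ring
      rw [hval]; positivity
    by_contra h
    push_neg at h
    have hv1 : (a:ℝ) + 1 < (a:ℝ) + 1 + 2/(a:ℝ) := by
      have : (0:ℝ) < 2/(a:ℝ) := by positivity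
      linarith
    have hq : (0:ℝ) < ((a:ℝ) + 1 + 2/(a:ℝ) - ρ₁) * ((a:ℝ) + 1 + 2/(a:ℝ) - ρ₂) :=
      mul_pos (by linarith) (by linarith)
    have hle := mul_nonpos_of_nonneg_of_nonpos hq.le
      (show (a:ℝ) + 1 + 2/(a:ℝ) - ρ₃ ≤ 0 by linarith)
    linarith
  -- conclusion
  have hdk : (k:ℝ)/(a:ℝ) ≤ 1 := (div_le_one ha0).mpr hkaR
  have hm1 : (k:ℝ) * (-1 - 1/(a:ℝ)) < k * ρ₁ := by
    exact mul_lt_mul_of_pos_left hu hk0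
  have hm1' : (k:ℝ) * ρ₁ < k * (-1) := mul_lt_mul_of_pos_left hρ1 hk0
  have hm3 : (k:ℝ) * ((a:ℝ)+1) < k * ρ₃ := mul_lt_mul_of_pos_left hρ3 hk0
  have hm3' : (k:ℝ) * ρ₃ < k * ((a:ℝ) + 1 + 2/(a:ℝ)) := mul_lt_mul_of_pos_left hv hk0
  have hexp : (k:ℝ) * (-1 - 1/(a:ℝ)) = -(k:ℝ) - (k:ℝ)/(a:ℝ) := by ring
  have hexp3 : (k:ℝ) * ((a:ℝ) + 1 + 2/(a:ℝ)) = (k:ℝ)*((a:ℝ)+1) + 2*((k:ℝ)/(a:ℝ)) := by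
    ring
  refine ⟨⟨by rw [hexp] at hm1; linarith, by linarith⟩, ⟨hm3, ?_⟩, ?_⟩
  · rw [hexp3] at hm3'; linarith
  · intro h2k
    have h2kR : 2*(k:ℝ) ≤ (a:ℝ) := by exact_mod_cast h2k
    have : 2*((k:ℝ)/(a:ℝ)) ≤ 1 := by
      rw [show 2*((k:ℝ)/(a:ℝ)) = (2*(k:ℝ))/(a:ℝ) by ring]
      exact (div_le_one ha0).mpr h2kR
    rw [hexp3] at hm3'; linarith
end

section
/- For integers a ≥ 34, 1 ≤ k ≤ a, and any integer n with -k ≤ n ≤ a + 1 - 2k, the floor of ℓ₁₃(n) = (ρ₁+ρ₃)n - kρ₁ρ₃ equals an + k(a+2). -/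
set_option maxHeartbeats 1000000 in
private lemma scft_rho2_upper (A ρ₁ ρ₂ ρ₃ : ℝ) (hA : 34 ≤ A)
    (hρ₁ : ρ₁ < -1) (hρ₃ : 0 < ρ₃)
    (hS : ρ₁ + ρ₂ + ρ₃ = A)
    (hP2 : ρ₁*ρ₂ + ρ₁*ρ₃ + ρ₂*ρ₃ = -(A+3))
    (hP3 : ρ₁*ρ₂*ρ₃ = 1) :
    ((A+2)^5 - 2*(A+2)^3 - (A+2)^2 + 6*(A+2)) + (A+2)^6 * ρ₂ < 0 := by
  have hsA : (0:ℝ) ≤ A - 34 := by linarith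
  set N : ℝ := (A+2)^5 - 2*(A+2)^3 - (A+2)^2 + 6*(A+2) with hN
  set P : ℝ := (A+2)^6 with hP
  have hN1pos : 0 < N := by
    rw [hN]
    linarith [pow_nonneg hsA 5, pow_nonneg hsA 4, pow_nonneg hsA 3, pow_nonneg hsA 2, hsA]
  have hN1lt : N < P := by
    rw [hN, hP]
    linarith [pow_nonneg hsA 6, pow_nonneg hsA 5, pow_nonneg hsA 4, pow_nonneg hsA 3,
      pow_nonneg hsA 2, hsA]
  have hPpos : 0 < P := by rw [hP]; positivity
  have key1 : -(N^3) - A*N^2*P + (A+3)*N*P^2 - P^3 < 0 := by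
    rw [hN, hP]
    linarith [pow_nonneg hsA 14, pow_nonneg hsA 13, pow_nonneg hsA 12, pow_nonneg hsA 11,
      pow_nonneg hsA 10, pow_nonneg hsA 9, pow_nonneg hsA 8, pow_nonneg hsA 7,
      pow_nonneg hsA 6, pow_nonneg hsA 5, pow_nonneg hsA 4, pow_nonneg hsA 3,
      pow_nonneg hsA 2, hsA]
  have hscaled : -(N^3) - A*N^2*P + (A+3)*N*P^2 - P^3
      = (-N - P*ρ₁) * (-N - P*ρ₂) * (-N - P*ρ₃) := by
    linear_combination N^2*P*hS + N*P^2*hP2 + P^3*hP3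
  by_contra hcon
  push_neg at hcon
  have f1 : 0 < -N - P*ρ₁ := by nlinarith [mul_lt_mul_of_pos_left hρ₁ hPpos]
  have f3 : 0 ≤ N + P*ρ₃ := by nlinarith [mul_pos hPpos hρ₃]
  nlinarith [key1, hscaled, mul_nonneg (mul_nonneg f1.le hcon) f3]

set_option maxHeartbeats 1000000 in
private lemma scft_rho2_lower (A ρ₁ ρ₂ ρ₃ : ℝ) (hA : 34 ≤ A)
    (hρ₁ : ρ₁ < -1) (hρ₃ : 0 < ρ₃)
    (hS : ρ₁ + ρ₂ + ρ₃ = A)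
    (hP2 : ρ₁*ρ₂ + ρ₁*ρ₃ + ρ₂*ρ₃ = -(A+3))
    (hP3 : ρ₁*ρ₂*ρ₃ = 1) :
    0 < (2*(A+2)^5 - 4*(A+2)^3 - (A+2)^2) + 2*((A+2)^6 * ρ₂) := by
  have hsA : (0:ℝ) ≤ A - 34 := by linarith
  set N : ℝ := 2*(A+2)^5 - 4*(A+2)^3 - (A+2)^2 with hN
  set P : ℝ := (A+2)^6 with hP
  have hNpos : 0 < N := by
    rw [hN]
    linarith [pow_nonneg hsA 5, pow_nonneg hsA 4, pow_nonneg hsA 3, pow_nonneg hsA 2, hsA]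
  have hNlt : N < 2*P := by
    rw [hN, hP]
    linarith [pow_nonneg hsA 6, pow_nonneg hsA 5, pow_nonneg hsA 4, pow_nonneg hsA 3,
      pow_nonneg hsA 2, hsA]
  have hPpos : 0 < P := by rw [hP]; positivity
  have key2 : 0 < -(N^3) - 2*A*N^2*P + 4*(A+3)*N*P^2 - 8*P^3 := by
    rw [hN, hP]
    linarith [pow_nonneg hsA 15, pow_nonneg hsA 14, pow_nonneg hsA 13, pow_nonneg hsA 12,
      pow_nonneg hsA 11, pow_nonneg hsA 10, pow_nonneg hsA 9, pow_nonneg hsA 8,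
      pow_nonneg hsA 7, pow_nonneg hsA 6, pow_nonneg hsA 5, pow_nonneg hsA 4,
      pow_nonneg hsA 3, pow_nonneg hsA 2, hsA]
  have hscaled : -(N^3) - 2*A*N^2*P + 4*(A+3)*N*P^2 - 8*P^3
      = (-N - 2*(P*ρ₁)) * (-N - 2*(P*ρ₂)) * (-N - 2*(P*ρ₃)) := by
    linear_combination 2*N^2*P*hS + 4*N*P^2*hP2 + 8*P^3*hP3
  by_contra hcon
  push_neg at hcon
  have f1 : 0 < -N - 2*(P*ρ₁) := by nlinarith [mul_lt_mul_of_pos_left hρ₁ hPpos]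
  have f3 : 0 ≤ N + 2*(P*ρ₃) := by nlinarith [mul_pos hPpos hρ₃]
  nlinarith [key2, hscaled, mul_nonneg (mul_nonneg f1.le (by linarith : 0 ≤ -N - 2*(P*ρ₂))) f3]

set_option maxHeartbeats 1000000 in
private lemma scft_F1 (A ρ₂ : ℝ) (hA : 34 ≤ A) (hρ₂ : ρ₂ < 0)
    (hUc : 0 < (2*(A+2)^5 - 4*(A+2)^3 - (A+2)^2) + 2*((A+2)^6 * ρ₂)) :
    0 ≤ 1 + (A+2)*ρ₂ - ρ₂^2 := by
  have hsA : (0:ℝ) ≤ A - 34 := by linarith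
  set N : ℝ := 2*(A+2)^5 - 4*(A+2)^3 - (A+2)^2 with hN
  set P : ℝ := (A+2)^6 with hP
  have hPpos : 0 < P := by rw [hP]; positivity
  have hw : 2*(P*ρ₂) < 0 := by nlinarith [mul_pos hPpos (neg_pos.mpr hρ₂)]
  have hNpos : 0 < N := by
    rw [hN]
    linarith [pow_nonneg hsA 5, pow_nonneg hsA 4, pow_nonneg hsA 3, pow_nonneg hsA 2, hsA]
  have keyL : 0 < 4*P^2 - 2*(A+2)*P*N - N^2 := by
    rw [hN, hP]
    linarith [pow_nonneg hsA 12, pow_nonneg hsA 11, pow_nonneg hsA 10, pow_nonneg hsA 9,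
      pow_nonneg hsA 8, pow_nonneg hsA 7, pow_nonneg hsA 6, pow_nonneg hsA 5,
      pow_nonneg hsA 4, pow_nonneg hsA 3, pow_nonneg hsA 2, hsA]
  by_contra hcon
  push_neg at hcon
  have hneg : 4*P^2*(1 + (A+2)*ρ₂ - ρ₂^2) < 0 :=
    mul_neg_of_pos_of_neg (by positivity) hcon
  nlinarith [keyL, hneg, mul_pos (show 0 < N - 2*(P*ρ₂) by linarith) hUc,
    mul_pos (mul_pos (show (0:ℝ) < 2*(A+2) by linarith) hPpos) hUc]

set_option maxHeartbeats 1000000 in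
private lemma scft_C (A ρ₂ : ℝ) (hA : 34 ≤ A) (hρ₂ : ρ₂ < 0)
    (hUc : 0 < (2*(A+2)^5 - 4*(A+2)^3 - (A+2)^2) + 2*((A+2)^6 * ρ₂)) :
    0 ≤ 1 + (A+2)*ρ₂ - 2*ρ₂^2 := by
  have hsA : (0:ℝ) ≤ A - 34 := by linarith
  set N : ℝ := 2*(A+2)^5 - 4*(A+2)^3 - (A+2)^2 with hN
  set P : ℝ := (A+2)^6 with hP
  have hPpos : 0 < P := by rw [hP]; positivity
  have hw : 2*(P*ρ₂) < 0 := by nlinarith [mul_pos hPpos (neg_pos.mpr hρ₂)]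
  have hNpos : 0 < N := by
    rw [hN]
    linarith [pow_nonneg hsA 5, pow_nonneg hsA 4, pow_nonneg hsA 3, pow_nonneg hsA 2, hsA]
  have keyC : 0 < 4*P^2 - 2*(A+2)*P*N - 2*N^2 := by
    rw [hN, hP]
    linarith [pow_nonneg hsA 12, pow_nonneg hsA 11, pow_nonneg hsA 10, pow_nonneg hsA 9,
      pow_nonneg hsA 8, pow_nonneg hsA 7, pow_nonneg hsA 6, pow_nonneg hsA 5,
      pow_nonneg hsA 4, pow_nonneg hsA 3, pow_nonneg hsA 2, hsA]
  by_contra hcon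
  push_neg at hcon
  have hneg : 4*P^2*(1 + (A+2)*ρ₂ - 2*ρ₂^2) < 0 :=
    mul_neg_of_pos_of_neg (by positivity) hcon
  nlinarith [keyC, hneg, mul_pos (show 0 < N - 2*(P*ρ₂) by linarith) hUc,
    mul_pos (mul_pos (show (0:ℝ) < 2*(A+2) by linarith) hPpos) hUc]

set_option maxHeartbeats 1000000 in
private lemma scft_H (A ρ₂ : ℝ) (hA : 34 ≤ A) (hρ₂ : ρ₂ < 0)
    (hLc : ((A+2)^5 - 2*(A+2)^3 - (A+2)^2 + 6*(A+2)) + (A+2)^6 * ρ₂ < 0) :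
    (A+1)*ρ₂^2 + ρ₂ + A*(1 + (A+2)*ρ₂ - 2*ρ₂^2) < 0 := by
  have hsA : (0:ℝ) ≤ A - 34 := by linarith
  set N : ℝ := (A+2)^5 - 2*(A+2)^3 - (A+2)^2 + 6*(A+2) with hN
  set P : ℝ := (A+2)^6 with hP
  have hPpos : 0 < P := by rw [hP]; positivity
  have hNpos : 0 < N := by
    rw [hN]
    linarith [pow_nonneg hsA 5, pow_nonneg hsA 4, pow_nonneg hsA 3, pow_nonneg hsA 2, hsA]
  have keyH : (1-A)*N^2 - (A+1)^2*P*N + A*P^2 < 0 := by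
    rw [hN, hP]
    linarith [pow_nonneg hsA 13, pow_nonneg hsA 12, pow_nonneg hsA 11, pow_nonneg hsA 10,
      pow_nonneg hsA 9, pow_nonneg hsA 8, pow_nonneg hsA 7, pow_nonneg hsA 6,
      pow_nonneg hsA 5, pow_nonneg hsA 4, pow_nonneg hsA 3, pow_nonneg hsA 2, hsA]
  by_contra hcon
  push_neg at hcon
  have hcon' : 0 ≤ P^2*((A+1)*ρ₂^2 + ρ₂ + A*(1 + (A+2)*ρ₂ - 2*ρ₂^2)) :=
    mul_nonneg (by positivity) hcon
  nlinarith [keyH, hcon',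
    mul_pos (show (0:ℝ) < A - 1 by linarith)
      (mul_pos_of_neg_of_neg (show N + P*ρ₂ < 0 from hLc) (show P*ρ₂ - N < 0 by nlinarith [mul_pos hPpos (neg_pos.mpr hρ₂)])),
    mul_pos (mul_pos (show (0:ℝ) < (A+1)^2 by positivity) hPpos) (show 0 < -(P*ρ₂) - N by linarith)]

set_option maxHeartbeats 1000000 in
theorem simplest_cubic_top_line_floor_first (a k n : ℤ) (ha : 34 ≤ a)
    (hk1 : 1 ≤ k) (hka : k ≤ a) (ρ₁ ρ₂ ρ₃ : ℝ)
    (h12 : ρ₁ < ρ₂) (h23 : ρ₂ < ρ₃)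
    (h1 : ρ₁^3 - a*ρ₁^2 - (a+3)*ρ₁ - 1 = 0)
    (h2 : ρ₂^3 - a*ρ₂^2 - (a+3)*ρ₂ - 1 = 0)
    (h3 : ρ₃^3 - a*ρ₃^2 - (a+3)*ρ₃ - 1 = 0)
    (hn1 : -k ≤ n) (hn2 : n ≤ a + 1 - 2*k) :
    ⌊(ρ₁+ρ₃)*(n:ℝ) - k*(ρ₁*ρ₃)⌋ = a*n + k*(a+2) := by
  have hA34 : (34:ℝ) ≤ (a:ℝ) := by exact_mod_cast ha
  have hk1' : (1:ℝ) ≤ (k:ℝ) := by exact_mod_cast hk1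
  have hka' : (k:ℝ) ≤ (a:ℝ) := by exact_mod_cast hka
  have hn1' : -(k:ℝ) ≤ (n:ℝ) := by exact_mod_cast hn1
  have hn2' : (n:ℝ) ≤ (a:ℝ) + 1 - 2*(k:ℝ) := by exact_mod_cast hn2
  -- Vieta
  have q1 : ρ₁^2 + (ρ₂ - (a:ℝ))*ρ₁ + (ρ₂^2 - (a:ℝ)*ρ₂ - ((a:ℝ)+3)) = 0 := by
    have e : (ρ₁ - ρ₂) * (ρ₁^2 + (ρ₂ - (a:ℝ))*ρ₁ + (ρ₂^2 - (a:ℝ)*ρ₂ - ((a:ℝ)+3))) = 0 := by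
      linear_combination h1 - h2
    exact (mul_eq_zero.mp e).resolve_left (sub_ne_zero.mpr (ne_of_lt h12))
  have q3 : ρ₃^2 + (ρ₂ - (a:ℝ))*ρ₃ + (ρ₂^2 - (a:ℝ)*ρ₂ - ((a:ℝ)+3)) = 0 := by
    have e : (ρ₃ - ρ₂) * (ρ₃^2 + (ρ₂ - (a:ℝ))*ρ₃ + (ρ₂^2 - (a:ℝ)*ρ₂ - ((a:ℝ)+3))) = 0 := by
      linear_combination h3 - h2
    exact (mul_eq_zero.mp e).resolve_left (sub_ne_zero.mpr (ne_of_gt h23))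
  have hsum : ρ₁ + ρ₃ = (a:ℝ) - ρ₂ := by
    have e : (ρ₁ - ρ₃) * (ρ₁ + ρ₃ - ((a:ℝ) - ρ₂)) = 0 := by linear_combination q1 - q3
    have := (mul_eq_zero.mp e).resolve_left (sub_ne_zero.mpr (ne_of_lt (h12.trans h23)))
    linarith [sub_eq_zero.mp this]
  have hprod : ρ₁*ρ₃ = ρ₂^2 - (a:ℝ)*ρ₂ - ((a:ℝ)+3) := by
    linear_combination ρ₁ * hsum - q1
  have hP3 : ρ₁*ρ₂*ρ₃ = 1 := by linear_combination ρ₂ * hprod + h2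
  have hS : ρ₁ + ρ₂ + ρ₃ = (a:ℝ) := by linarith
  have hP2 : ρ₁*ρ₂ + ρ₁*ρ₃ + ρ₂*ρ₃ = -((a:ℝ)+3) := by
    linear_combination hprod + ρ₂ * hsum
  -- ordering
  have hρ₃ : 0 < ρ₃ := by
    by_contra h
    push_neg at h
    have h2n : ρ₂ < 0 := lt_of_lt_of_le h23 h
    have h1n : ρ₁ < 0 := lt_trans h12 h2n
    nlinarith [mul_pos (neg_pos.mpr h1n) (neg_pos.mpr h2n), hP3]
  have hρ₂ : ρ₂ < 0 := by
    rcases lt_or_ge ρ₂ 0 with h|h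
    · exact h
    · exfalso
      rcases lt_or_ge ρ₁ 0 with h1|h1
      · nlinarith [hP3, mul_nonneg h hρ₃.le]
      · nlinarith [hP2, mul_nonneg h1 h, mul_nonneg h1 hρ₃.le, mul_nonneg h hρ₃.le, hA34]
  have hρ₁ : ρ₁ < -1 := by
    by_contra h
    push_neg at h
    have e1 : (-1 - ρ₁)*(-1 - ρ₂)*(-1 - ρ₃) = 1 := by
      linear_combination -hS - hP2 - hP3
    have h2g : (-1:ℝ) - ρ₂ < 0 := by linarith
    have h3g : (-1:ℝ) - ρ₃ < 0 := by linarith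
    nlinarith [e1, mul_nonneg (neg_nonneg.mpr (show (-1:ℝ) - ρ₁ ≤ 0 by linarith))
      (mul_pos_of_neg_of_neg h2g h3g).le]
  -- sharp bounds on ρ₂
  have hLc := scft_rho2_upper (a:ℝ) ρ₁ ρ₂ ρ₃ hA34 hρ₁ hρ₃ hS hP2 hP3
  have hUc := scft_rho2_lower (a:ℝ) ρ₁ ρ₂ ρ₃ hA34 hρ₁ hρ₃ hS hP2 hP3
  have hF1 := scft_F1 (a:ℝ) ρ₂ hA34 hρ₂ hUc
  have hC := scft_C (a:ℝ) ρ₂ hA34 hρ₂ hUc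
  have hH := scft_H (a:ℝ) ρ₂ hA34 hρ₂ hLc
  have hp : ρ₂*(ρ₁*ρ₃) = 1 := by linear_combination hP3
  -- the two key bounds
  have hM1 : 0 ≤ ρ₂^2*(n:ℝ) + k + k*((a:ℝ)+2)*ρ₂ := by
    nlinarith [mul_nonneg (show (0:ℝ) ≤ (n:ℝ)+k by linarith) (sq_nonneg ρ₂),
      mul_nonneg (show (0:ℝ) ≤ (k:ℝ) by linarith) hF1]
  have hM2 : ρ₂^2*(n:ℝ) + k + k*((a:ℝ)+2)*ρ₂ < -ρ₂ := by
    nlinarith [hH, mul_nonneg (show (0:ℝ) ≤ (a:ℝ)+1-2*(k:ℝ)-(n:ℝ) by linarith) (sq_nonneg ρ₂),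
      mul_nonneg (show (0:ℝ) ≤ (a:ℝ)-(k:ℝ) by linarith) hC]
  have h0 : (-ρ₂)*((-ρ₂)*(n:ℝ) - k*(ρ₁*ρ₃) - k*((a:ℝ)+2))
      = ρ₂^2*(n:ℝ) + k + k*((a:ℝ)+2)*ρ₂ := by
    linear_combination (k:ℝ)*hp
  have hDlow : 0 ≤ (-ρ₂)*(n:ℝ) - k*(ρ₁*ρ₃) - k*((a:ℝ)+2) := by
    by_contra hcon
    push_neg at hcon
    nlinarith [mul_pos (neg_pos.mpr hρ₂) (neg_pos.mpr hcon), hM1, h0]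
  have hDhigh : (-ρ₂)*(n:ℝ) - k*(ρ₁*ρ₃) - k*((a:ℝ)+2) < 1 := by
    by_contra hcon
    push_neg at hcon
    have := mul_le_mul_of_nonneg_left hcon (neg_pos.mpr hρ₂).le
    nlinarith [this, hM2, h0]
  have hreq : (ρ₁+ρ₃)*(n:ℝ) - k*(ρ₁*ρ₃)
      = ((a:ℝ)*(n:ℝ) + (k:ℝ)*((a:ℝ)+2)) + ((-ρ₂)*(n:ℝ) - k*(ρ₁*ρ₃) - k*((a:ℝ)+2)) := by
    linear_combination (n:ℝ)*hsum
  rw [Int.floor_eq_iff]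
  constructor
  · push_cast
    linarith [hDlow, hreq]
  · push_cast
    linarith [hDhigh, hreq]
end

section
/- For integers a ≥ 34, 1 ≤ k ≤ a, integers 1 ≤ i ≤ ⌊k/2⌋, and any integer n with (a+1-2k) + (i-1)(a+2) + 1 ≤ n ≤ (a+1-2k) + i(a+2), the floor of ℓ₁₃(n) = (ρ₁+ρ₃)n - kρ₁ρ₃ equals an + k(a+2) + i. -/
set_option maxHeartbeats 1000000

lemma num1pos (a : ℝ) (ha : 34 ≤ a) :
    0 < a^6+4*a^5-18*a^4-136*a^3-316*a^2-336*a-136 := by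
  have h0 : (0:ℝ) < a := by linarith
  have h1 : 34*a ≤ a^2 := by nlinarith
  have h2 : 34*a^2 ≤ a^3 := by nlinarith
  have h3 : 34*a^3 ≤ a^4 := by nlinarith
  have h4 : 34*a^4 ≤ a^5 := by nlinarith
  have h5 : 34*a^5 ≤ a^6 := by nlinarith
  nlinarith

lemma num2pos (a : ℝ) (ha : 34 ≤ a) :
    0 < a^9+22*a^8+170*a^7+658*a^6+1440*a^5+1840*a^4+1316*a^3+440*a^2+24*a-8 := by
  have h0 : (0:ℝ) < a := by linarith
  have p2 : (0:ℝ) < a^2 := by positivity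
  have p3 : (0:ℝ) < a^3 := by positivity
  have p4 : (0:ℝ) < a^4 := by positivity
  have p5 : (0:ℝ) < a^5 := by positivity
  have p6 : (0:ℝ) < a^6 := by positivity
  have p7 : (0:ℝ) < a^7 := by positivity
  have p8 : (0:ℝ) < a^8 := by positivity
  have p9 : (0:ℝ) < a^9 := by positivity
  nlinarith

lemma aux_bound (a k i j u δ : ℝ) (ha : 34 ≤ a) (hk1 : 1 ≤ k) (hka : k ≤ a)
    (hi1 : 1 ≤ i) (hik : 2*i ≤ k) (hj1 : 1 ≤ j) (hj2 : j ≤ a+2)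
    (hu : u*(a+2) = 1) (hδ1 : 2*u^3 < δ) (hδ2 : a*δ < (2*a+2)*u^3) :
    i - k ≤ (u-δ)*(((a+1-2*k)+(i-1)*(a+2)+j) - k*a) - k*(u-δ)^2 ∧
      (u-δ)*(((a+1-2*k)+(i-1)*(a+2)+j) - k*a) - k*(u-δ)^2 < i-k+1 := by
  have ha2 : (0:ℝ) < a + 2 := by linarith
  have h0a : (0:ℝ) < a := by linarith
  have hupos : 0 < u := by
    by_contra h
    push_neg at h
    nlinarith [mul_nonneg (neg_nonneg.mpr h) ha2.le]
  have hu36 : 36*u ≤ 1 := by nlinarith [mul_nonneg (by linarith : (0:ℝ) ≤ a - 34) hupos.le]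
  have hu3pos : 0 < u^3 := by positivity
  have hδpos : 0 < δ := by linarith
  have h36a : 36*u^2 ≤ u := by nlinarith [mul_le_mul_of_nonneg_left hu36 hupos.le]
  have h36b : 36*u^3 ≤ u^2 := by nlinarith [mul_le_mul_of_nonneg_left h36a hupos.le]
  have hδlt3 : δ < 3*u^3 := by
    have h1' : a*δ < a*(3*u^3) := by nlinarith [mul_nonneg (by linarith : (0:ℝ) ≤ a-2) hu3pos.le]
    exact lt_of_mul_lt_mul_left h1' h0a.le
  have hδu : δ < u := by linarith
  have h2uδ : 0 < 2*u - δ := by linarith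
  have hau2 : a*u^2 ≤ u := by
    have he : a*u^2 + 2*u^2 = u := by linear_combination u*hu
    nlinarith [sq_nonneg u]
  -- key identity
  have hQ : (u-δ)*(((a+1-2*k)+(i-1)*(a+2)+j) - k*a) - k*(u-δ)^2 - (i-k-1)
      = (a+1+j)*u + δ*((k+1-i)*(a+2)-(a+1+j)) + k*δ*(2*u-δ) - k*u^2 := by
    linear_combination (i-1-k) * hu
  -- lower bound
  have hdecomp : ((a+1+j)*u + δ*((k+1-i)*(a+2)-(a+1+j)) + k*δ*(2*u-δ) - k*u^2) - 1
      = (j-1)*(u-δ) + (k/2)*(a+2)*(δ-2*u^3) + (k/2-i)*(a+2)*δ + k*δ*(2*u-δ) := by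
    linear_combination (1 + k*u^2) * hu
  have t1 : 0 ≤ (j-1)*(u-δ) := mul_nonneg (by linarith) (by linarith)
  have t2 : 0 ≤ (k/2)*(a+2)*(δ-2*u^3) :=
    mul_nonneg (mul_nonneg (by linarith) ha2.le) (by linarith)
  have t3 : 0 ≤ (k/2-i)*(a+2)*δ :=
    mul_nonneg (mul_nonneg (by linarith) ha2.le) hδpos.le
  have t4 : 0 ≤ k*δ*(2*u-δ) :=
    mul_nonneg (mul_nonneg (by linarith) hδpos.le) h2uδ.le
  have hQlow : 1 ≤ (a+1+j)*u + δ*((k+1-i)*(a+2)-(a+1+j)) + k*δ*(2*u-δ) - k*u^2 := by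
    linarith
  -- upper bound pieces
  have hMle : δ*((k+1-i)*(a+2)-(a+1+j)) ≤ δ*(k*(a+2)) - δ*(a+1+j) := by
    nlinarith [mul_nonneg (mul_nonneg hδpos.le (by linarith : (0:ℝ) ≤ i-1)) ha2.le]
  have hA : 2*u^2 ≤ δ*(a+1+j) := by
    have h1' : 2*u^3*(a+2) ≤ δ*(a+1+j) :=
      mul_le_mul hδ1.le (by linarith) (by linarith) hδpos.le
    have h2' : 2*u^3*(a+2) = 2*u^2 := by linear_combination 2*u^2*hu
    linarith
  have hB : δ*(k*(a+2)) - k*u^2 < u := by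
    have hk2 : (0:ℝ) < k*(a+2) := by positivity
    have h1' : a*δ*(k*(a+2)) < (2*a+2)*u^3*(k*(a+2)) :=
      mul_lt_mul_of_pos_right hδ2 hk2
    have h2' : (2*a+2)*u^3*(k*(a+2)) = (2*a+2)*k*u^2 := by
      linear_combination (2*a+2)*k*u^2 * hu
    have h1'' : a*δ*(k*(a+2)) < (2*a+2)*k*u^2 := by linarith
    have h3' : (a+2)*k*u^2 ≤ a*u := by
      nlinarith [mul_le_mul_of_nonneg_right hau2 (by positivity : (0:ℝ) ≤ u^2),
        mul_nonneg (mul_nonneg (by linarith : (0:ℝ) ≤ a-k) ha2.le) (sq_nonneg u)]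
    have h4' : a*(δ*(k*(a+2)) - k*u^2) < a*u := by nlinarith [h1'', h3']
    exact lt_of_mul_lt_mul_left h4' h0a.le
  have hC : k*δ*(2*u-δ) < 2*u^2 := by
    have hkd : k*δ ≤ a*(3*u^3) := mul_le_mul hka hδlt3.le hδpos.le h0a.le
    have hc1 : k*δ*(2*u-δ) ≤ a*(3*u^3)*(2*u) :=
      mul_le_mul hkd (by linarith) h2uδ.le (by positivity)
    have hc2 : a*u^2*u^2 ≤ u*u^2 := mul_le_mul_of_nonneg_right hau2 (sq_nonneg u)
    nlinarith [h36b, hupos]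
  have hD : (a+1+j)*u ≤ 2 - u := by
    have h1' : (a+1+j)*u ≤ (2*(a+2)-1)*u :=
      mul_le_mul_of_nonneg_right (by linarith) hupos.le
    have h2' : (2*(a+2)-1)*u = 2 - u := by linear_combination 2*hu
    linarith
  have hQhigh : (a+1+j)*u + δ*((k+1-i)*(a+2)-(a+1+j)) + k*δ*(2*u-δ) - k*u^2 < 2 := by
    linarith
  constructor
  · linarith
  · linarith

theorem simplest_cubic_top_line_floor_middle (a k n i : ℤ) (ha : 34 ≤ a)
    (hk1 : 1 ≤ k) (hka : k ≤ a) (ρ₁ ρ₂ ρ₃ : ℝ)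
    (h12 : ρ₁ < ρ₂) (h23 : ρ₂ < ρ₃)
    (h1 : ρ₁^3 - a*ρ₁^2 - (a+3)*ρ₁ - 1 = 0)
    (h2 : ρ₂^3 - a*ρ₂^2 - (a+3)*ρ₂ - 1 = 0)
    (h3 : ρ₃^3 - a*ρ₃^2 - (a+3)*ρ₃ - 1 = 0)
    (hi1 : 1 ≤ i) (hi2 : i ≤ k / 2)
    (hn1 : (a + 1 - 2*k) + (i-1)*(a+2) + 1 ≤ n)
    (hn2 : n ≤ (a + 1 - 2*k) + i*(a+2)) :
    ⌊(ρ₁+ρ₃)*(n:ℝ) - k*(ρ₁*ρ₃)⌋ = a*n + k*(a+2) + i := by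
  -- real versions of integer data
  set A : ℝ := (a:ℝ) with hA
  have haR : (34:ℝ) ≤ A := by rw [hA]; exact_mod_cast ha
  have ha2 : (0:ℝ) < A + 2 := by linarith
  have h0a : (0:ℝ) < A := by linarith
  -- symmetric functions
  have h12' : ρ₁ - ρ₂ ≠ 0 := sub_ne_zero.mpr h12.ne
  have h23' : ρ₂ - ρ₃ ≠ 0 := sub_ne_zero.mpr h23.ne
  have h13' : ρ₁ - ρ₃ ≠ 0 := sub_ne_zero.mpr (h12.trans h23).ne
  have s12 : ρ₁^2 + ρ₁*ρ₂ + ρ₂^2 - A*(ρ₁+ρ₂) - (A+3) = 0 := by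
    rcases mul_eq_zero.mp (show (ρ₁ - ρ₂) * (ρ₁^2 + ρ₁*ρ₂ + ρ₂^2 - A*(ρ₁+ρ₂) - (A+3)) = 0 by
      linear_combination h1 - h2) with h' | h'
    · exact absurd h' h12'
    · exact h'
  have s23 : ρ₂^2 + ρ₂*ρ₃ + ρ₃^2 - A*(ρ₂+ρ₃) - (A+3) = 0 := by
    rcases mul_eq_zero.mp (show (ρ₂ - ρ₃) * (ρ₂^2 + ρ₂*ρ₃ + ρ₃^2 - A*(ρ₂+ρ₃) - (A+3)) = 0 by
      linear_combination h2 - h3) with h' | h'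
    · exact absurd h' h23'
    · exact h'
  have e1 : ρ₁ + ρ₂ + ρ₃ = A := by
    rcases mul_eq_zero.mp (show (ρ₁ - ρ₃) * (ρ₁ + ρ₂ + ρ₃ - A) = 0 by
      linear_combination s12 - s23) with h' | h'
    · exact absurd h' h13'
    · linarith [sub_eq_zero.mp h']
  have e2 : ρ₁*ρ₂ + ρ₁*ρ₃ + ρ₂*ρ₃ = -(A+3) := by
    linear_combination -s12 + (ρ₁+ρ₂)*e1
  have e3 : ρ₁*ρ₂*ρ₃ = 1 := by
    linear_combination h2 - ρ₂^2*e1 + ρ₂*e2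
  have hP : ∀ x : ℝ, (x-ρ₁)*(x-ρ₂)*(x-ρ₃) = x^3 - A*x^2 - (A+3)*x - 1 := by
    intro x
    linear_combination (-x^2)*e1 + x*e2 - e3
  -- root locations
  have hρ₃ : A < ρ₃ := by
    by_contra h
    push_neg at h
    have hPa : (A-ρ₁)*(A-ρ₂)*(A-ρ₃) = -(A^2+3*A+1) := by
      rw [hP A]; ring
    nlinarith [mul_nonneg (mul_nonneg (by linarith : (0:ℝ) ≤ A-ρ₁) (by linarith : (0:ℝ) ≤ A-ρ₂)) (by linarith : (0:ℝ) ≤ A-ρ₃)]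
  have hρ₁ : ρ₁ < -1 := by
    by_contra h
    push_neg at h
    have hPm : (-1-ρ₁)*(-1-ρ₂)*(-1-ρ₃) = 1 := by
      rw [hP (-1)]; ring
    nlinarith [mul_nonneg (mul_nonneg (by linarith : (0:ℝ) ≤ ρ₁+1) (by linarith : (0:ℝ) ≤ ρ₂+1)) (by linarith : (0:ℝ) ≤ ρ₃+1)]
  -- bounds on ρ₂
  have hTa : (0:ℝ) < (A+2)^9 := by positivity
  have hT1 : -(1/(A+2) - 2/(A+2)^3) < ρ₂ := by
    set c : ℝ := -(1/(A+2) - 2/(A+2)^3) with hc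
    have hcval : (c-ρ₁)*(c-ρ₂)*(c-ρ₃)
        = (A^6+4*A^5-18*A^4-136*A^3-316*A^2-336*A-136)/(A+2)^9 := by
      rw [hP c, hc]
      field_simp
      ring
    have hpos : 0 < (c-ρ₁)*(c-ρ₂)*(c-ρ₃) := by
      rw [hcval]
      exact div_pos (num1pos A haR) hTa
    have hc1 : -1 < c := by
      rw [hc]
      have h1' : 1/(A+2) ≤ 1 := by
        rw [div_le_one ha2]; linarith
      have h2' : 0 < 2/(A+2)^3 := by positivity
      linarith
    have hc0 : c < 1 := by
      rw [hc]
      have h1' : 0 < 1/(A+2) := by positivity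
      have h2' : 2/(A+2)^3 ≤ 1 := by
        rw [div_le_one (by positivity)]; nlinarith
      linarith
    by_contra h
    push_neg at h
    nlinarith [mul_nonneg (by linarith : (0:ℝ) ≤ c-ρ₂) (by linarith : (0:ℝ) ≤ ρ₃-c),
      (by linarith : (0:ℝ) < c-ρ₁)]
  have hT2 : ρ₂ < -(1/(A+2) - (2+2/A)/(A+2)^3) := by
    set c : ℝ := -(1/(A+2) - (2+2/A)/(A+2)^3) with hc
    have hcval : (c-ρ₁)*(c-ρ₂)*(c-ρ₃)
        = -((A^9+22*A^8+170*A^7+658*A^6+1440*A^5+1840*A^4+1316*A^3+440*A^2+24*A-8)/(A^3*(A+2)^9)) := by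
      rw [hP c, hc]
      field_simp
      ring
    have hneg : (c-ρ₁)*(c-ρ₂)*(c-ρ₃) < 0 := by
      rw [hcval, neg_lt_zero]
      exact div_pos (num2pos A haR) (by positivity)
    have hc1 : -1 < c := by
      rw [hc]
      have h1' : 1/(A+2) ≤ 1 := by
        rw [div_le_one ha2]; linarith
      have h2' : 0 < (2+2/A)/(A+2)^3 := by positivity
      linarith
    have hc0 : c < 1 := by
      rw [hc]
      have h1' : 0 < 1/(A+2) := by positivity
      have h2' : (2+2/A)/(A+2)^3 ≤ 1 := by
        rw [div_le_one (by positivity)]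
        have : 2/A ≤ 1 := by rw [div_le_one h0a]; linarith
        nlinarith
      linarith
    by_contra h
    push_neg at h
    nlinarith [mul_nonneg (by linarith : (0:ℝ) ≤ ρ₂-c) (by linarith : (0:ℝ) ≤ ρ₃-c),
      (by linarith : (0:ℝ) < c-ρ₁)]
  -- set up u and δ
  set u : ℝ := 1/(A+2) with hudef
  have hu : u*(A+2) = 1 := by
    rw [hudef]; field_simp
  have hu3 : u^3 = 1/(A+2)^3 := by
    rw [hudef, div_pow, one_pow]
  have hδ1 : 2*u^3 < u + ρ₂ := by
    have : 2*u^3 = 2/(A+2)^3 := by rw [hu3]; ring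
    rw [this, hudef]
    linarith [hT1]
  have hδ2 : A*(u + ρ₂) < (2*A+2)*u^3 := by
    have he : A*((2+2/A)/(A+2)^3) = (2*A+2)*u^3 := by
      rw [hu3]; field_simp
    have hlt : u + ρ₂ < (2+2/A)/(A+2)^3 := by
      rw [hudef]; linarith [hT2]
    calc A*(u + ρ₂) < A*((2+2/A)/(A+2)^3) :=
          mul_lt_mul_of_pos_left hlt h0a
      _ = (2*A+2)*u^3 := he
  -- integer j
  set j : ℤ := n - ((a+1-2*k)+(i-1)*(a+2)) with hjdef
  have hx : i*(a+2) = (i-1)*(a+2) + (a+2) := by ring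
  have hj1 : 1 ≤ j := by rw [hjdef]; linarith
  have hj2 : j ≤ a+2 := by rw [hjdef]; linarith
  have hik : 2*i ≤ k := by omega
  -- apply the bound lemma
  obtain ⟨L, U⟩ := aux_bound A (k:ℝ) (i:ℝ) (j:ℝ) u (u+ρ₂) haR
    (by exact_mod_cast hk1) (by rw [hA]; exact_mod_cast hka)
    (by exact_mod_cast hi1) (by rw [show (2:ℝ)*(i:ℝ) = ((2*i : ℤ):ℝ) by push_cast; ring]; exact_mod_cast hik)
    (by exact_mod_cast hj1) (by rw [hA]; push_cast; exact_mod_cast (by exact_mod_cast hj2 : (j:ℝ) ≤ ((a:ℤ):ℝ)+2))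
    hu hδ1 hδ2
  have hjR : (j:ℝ) = (n:ℝ) - ((A+1-2*(k:ℝ))+((i:ℝ)-1)*(A+2)) := by
    rw [hjdef, hA]; push_cast; ring
  have hE : (u-(u+ρ₂))*(((A+1-2*(k:ℝ))+((i:ℝ)-1)*(A+2)+(j:ℝ)) - (k:ℝ)*A) - (k:ℝ)*(u-(u+ρ₂))^2
      = (-ρ₂)*((n:ℝ) - (k:ℝ)*A) - (k:ℝ)*ρ₂^2 := by
    linear_combination (-ρ₂)*hjR
  rw [hE] at L U
  -- express the target
  have hρ₂ne : ρ₂ ≠ 0 := by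
    intro h
    rw [h] at e3
    simp at e3
  have h13s : ρ₁ + ρ₃ = A - ρ₂ := by linarith
  have h13p : ρ₁*ρ₃ = ρ₂^2 - A*ρ₂ - (A+3) := by
    have hmulc : (ρ₁*ρ₃)*ρ₂ = (ρ₂^2 - A*ρ₂ - (A+3))*ρ₂ := by
      linear_combination e3 - h2
    exact mul_right_cancel₀ hρ₂ne hmulc
  have hfin : (ρ₁+ρ₃)*(n:ℝ) - (k:ℝ)*(ρ₁*ρ₃) - ((a*n + k*(a+2) + i : ℤ):ℝ)
      = ((-ρ₂)*((n:ℝ) - (k:ℝ)*A) - (k:ℝ)*ρ₂^2) - ((i:ℝ) - (k:ℝ)) := by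
    push_cast [hA]
    linear_combination (n:ℝ)*h13s - (k:ℝ)*h13p
  rw [Int.floor_eq_iff]
  constructor
  · push_cast at hfin ⊢
    linarith
  · push_cast at hfin ⊢
    linarith
end

section
/- For integers a ≥ 34, 1 ≤ k ≤ a, and any integer n with (a+1-2k) + (a+2)⌊k/2⌋ + (a+2)(⌈k/2⌉-1) + 2 ≤ n ≤ k(a+1) + [k > a/2], the floor of ℓ₁₃(n) = (ρ₁+ρ₃)n - kρ₁ρ₃ equals an + k(a+2) + k, where [k > a/2] is 1 if 2k > a and 0 otherwise. -/
set_option maxHeartbeats 2000000 in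
theorem simplest_cubic_top_line_floor_last (a k n : ℤ) (ha : 34 ≤ a)
    (hk1 : 1 ≤ k) (hka : k ≤ a) (ρ₁ ρ₂ ρ₃ : ℝ)
    (h12 : ρ₁ < ρ₂) (h23 : ρ₂ < ρ₃)
    (h1 : ρ₁^3 - a*ρ₁^2 - (a+3)*ρ₁ - 1 = 0)
    (h2 : ρ₂^3 - a*ρ₂^2 - (a+3)*ρ₂ - 1 = 0)
    (h3 : ρ₃^3 - a*ρ₃^2 - (a+3)*ρ₃ - 1 = 0)
    (hn1 : (a + 1 - 2*k) + (a+2)*(k/2) + (a+2)*((k+1)/2 - 1) + 2 ≤ n)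
    (hn2 : n ≤ k*(a+1) + (if 2*k > a then 1 else 0)) :
    ⌊(ρ₁+ρ₃)*(n:ℝ) - k*(ρ₁*ρ₃)⌋ = a*n + k*(a+2) + k := by
  have hA : (34:ℝ) ≤ (a:ℝ) := by exact_mod_cast ha
  have hkR1 : (1:ℝ) ≤ (k:ℝ) := by exact_mod_cast hk1
  have hkRa : (k:ℝ) ≤ (a:ℝ) := by exact_mod_cast hka
  -- simplify the bounds on n
  have hq : k/2 + (k+1)/2 = k := by omega
  have hn1' : a*k + 1 ≤ n := by
    have hsum : (a+2)*(k/2) + (a+2)*((k+1)/2 - 1) = (a+2)*(k/2 + (k+1)/2) - (a+2) := by ring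
    rw [hq] at hsum
    linarith [hn1, hsum]
  have hn2' : n ≤ k*a + k + 1 := by
    have hr : k*(a+1) = k*a + k := by ring
    by_cases h : 2*k > a <;> simp [h] at hn2 <;> omega
  have hn1R : (a:ℝ)*(k:ℝ) + 1 ≤ (n:ℝ) := by exact_mod_cast hn1'
  have hn2R : (n:ℝ) ≤ (k:ℝ)*(a:ℝ) + (k:ℝ) + 1 := by exact_mod_cast hn2'
  set A : ℝ := (a:ℝ) with hAdef
  -- Vieta
  have hne12 : ρ₁ - ρ₂ ≠ 0 := sub_ne_zero.2 (ne_of_lt h12)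
  have hne23 : ρ₂ - ρ₃ ≠ 0 := sub_ne_zero.2 (ne_of_lt h23)
  have hne13 : ρ₁ - ρ₃ ≠ 0 := sub_ne_zero.2 (ne_of_lt (h12.trans h23))
  have q12 : ρ₁^2 + ρ₁*ρ₂ + ρ₂^2 - A*(ρ₁+ρ₂) - (A+3) = 0 := by
    have h : (ρ₁ - ρ₂) * (ρ₁^2 + ρ₁*ρ₂ + ρ₂^2 - A*(ρ₁+ρ₂) - (A+3)) = 0 := by
      linear_combination h1 - h2
    rcases mul_eq_zero.1 h with h | h
    · exact absurd h hne12
    · exact h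
  have q23 : ρ₂^2 + ρ₂*ρ₃ + ρ₃^2 - A*(ρ₂+ρ₃) - (A+3) = 0 := by
    have h : (ρ₂ - ρ₃) * (ρ₂^2 + ρ₂*ρ₃ + ρ₃^2 - A*(ρ₂+ρ₃) - (A+3)) = 0 := by
      linear_combination h2 - h3
    rcases mul_eq_zero.1 h with h | h
    · exact absurd h hne23
    · exact h
  have e1 : ρ₁ + ρ₂ + ρ₃ = A := by
    have h : (ρ₁ - ρ₃) * (ρ₁ + ρ₂ + ρ₃ - A) = 0 := by linear_combination q12 - q23
    rcases mul_eq_zero.1 h with h | h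
    · exact absurd h hne13
    · linarith [h]
  have e2 : ρ₁*ρ₂ + ρ₁*ρ₃ + ρ₂*ρ₃ = -(A+3) := by
    linear_combination (ρ₁+ρ₂)*e1 - q12
  have e3 : ρ₁*ρ₂*ρ₃ = 1 := by
    linear_combination h1 - ρ₁^2*e1 + ρ₁*e2
  have hf : ∀ x : ℝ, x^3 - A*x^2 - (A+3)*x - 1 = (x-ρ₁)*(x-ρ₂)*(x-ρ₃) := by
    intro x
    linear_combination (x^2)*e1 - x*e2 + e3
  -- root locations
  have hρ3pos : 0 < ρ₃ := by linarith [e1]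
  have hρ2neg : ρ₂ < 0 := by
    by_contra h
    push_neg at h
    have hρ1pos : 0 < ρ₁ := by
      by_contra h1'
      push_neg at h1'
      have hle : ρ₁*(ρ₂*ρ₃) ≤ 0 :=
        mul_nonpos_of_nonpos_of_nonneg h1' (mul_nonneg h hρ3pos.le)
      nlinarith [e3]
    nlinarith [e2, mul_nonneg hρ1pos.le h, mul_pos hρ1pos hρ3pos, mul_nonneg h hρ3pos.le]
  have hρ1neg : ρ₁ < 0 := h12.trans hρ2neg
  -- ρ₃ ∈ (A+1, A+2)
  have hρ3lb : A + 1 < ρ₃ := by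
    have hv := hf (A+1)
    have hval : (A+1)^3 - A*(A+1)^2 - (A+3)*(A+1) - 1 = -(2*A+3) := by ring
    by_contra h
    push_neg at h
    have hp : 0 ≤ (A+1-ρ₁)*(A+1-ρ₂)*(A+1-ρ₃) :=
      mul_nonneg (mul_pos (by linarith) (by linarith)).le (by linarith)
    linarith [hval ▸ hv]
  have hρ3ub : ρ₃ < A + 2 := by
    have hv := hf (A+2)
    have hval : (A+2)^3 - A*(A+2)^2 - (A+3)*(A+2) - 1 = (A+2)*(A+1) - 1 := by ring
    by_contra h
    push_neg at h
    have hp : (A+2-ρ₁)*(A+2-ρ₂)*(A+2-ρ₃) ≤ 0 :=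
      mul_nonpos_of_nonneg_of_nonpos
        (mul_nonneg (by linarith) (by linarith)) (by linarith)
    nlinarith [hval ▸ hv]
  have hρ1ub : ρ₁ < -1/2 := by linarith [e1]
  have hApos : (0:ℝ) < A + 2 := by linarith
  have hA3pos : (0:ℝ) < A + 3 := by linarith
  -- ρ₂ > -B where B = 1/(A+2)
  obtain ⟨B, hB0, hBe⟩ : ∃ B:ℝ, 0 < B ∧ B*(A+2) = 1 :=
    ⟨1/(A+2), by positivity, by field_simp⟩
  have hB1 : B < 1/2 := by nlinarith
  have hρ2lbB : -B < ρ₂ := by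
    have hv := hf (-B)
    have hval : (-B)^3 - A*(-B)^2 - (A+3)*(-B) - 1 = B^2*(2-B) := by
      linear_combination (1-B)*hBe
    by_contra h
    push_neg at h
    have hp : (-B-ρ₁)*(-B-ρ₂)*(-B-ρ₃) ≤ 0 :=
      mul_nonpos_of_nonneg_of_nonpos
        (mul_nonneg (by linarith) (by linarith)) (by linarith)
    have hposv : (0:ℝ) < B^2*(2-B) := by nlinarith
    linarith [hval.symm.trans hv]
  obtain ⟨C, hC0, hCe⟩ : ∃ C:ℝ, 0 < C ∧ C*(A+3) = 1 :=
    ⟨1/(A+3), by positivity, by field_simp⟩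
  have hC1 : C < 1/2 := by nlinarith
  have hρ2ubC : ρ₂ < -C := by
    have hv := hf (-C)
    have hval : (-C)^3 - A*(-C)^2 - (A+3)*(-C) - 1 = -(C^2*(A+C)) := by
      linear_combination hCe
    by_contra h
    push_neg at h
    have h12' : (-C-ρ₁)*(-C-ρ₂) ≤ 0 :=
      mul_nonpos_of_nonneg_of_nonpos (by linarith) (by linarith)
    have hp : 0 ≤ (-C-ρ₁)*(-C-ρ₂)*(-C-ρ₃) := by
      have hq' := mul_nonneg (neg_nonneg.2 h12') (show (0:ℝ) ≤ -(-C-ρ₃) by linarith)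
      nlinarith [hq']
    have hnegv : -(C^2*(A+C)) < 0 := by nlinarith
    linarith [hval.symm.trans hv]
  -- multiplied forms for t := -ρ₂
  set t : ℝ := -ρ₂ with htdef
  have ht0 : 0 < t := by simp only [htdef]; linarith
  have hρ2lb : (A+2)*t < 1 := by
    have h' : (A+2)*(B - t) > 0 := mul_pos hApos (by simp only [htdef]; linarith)
    nlinarith [hBe]
  have hρ2ub : 1 < (A+3)*t := by
    have h' : (A+3)*(t - C) > 0 := mul_pos hA3pos (by simp only [htdef]; linarith)
    nlinarith [hCe]
  have hρ2ne : ρ₂ ≠ 0 := by intro h; rw [h] at h2; norm_num at h2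
  have hroot : (A+3)*t - A*t^2 - t^3 = 1 := by
    simp only [htdef]
    linear_combination h2
  have hbr : ρ₁*ρ₃ + (A+3) + A*ρ₂ - ρ₂^2 = 0 := by
    have h' : ρ₂ * (ρ₁*ρ₃ + (A+3) + A*ρ₂ - ρ₂^2) = ρ₂ * 0 := by
      rw [mul_zero]
      linear_combination e3 - h2
    exact mul_left_cancel₀ hρ2ne h'
  have key : (ρ₁+ρ₃)*(n:ℝ) - (k:ℝ)*(ρ₁*ρ₃)
      = A*(n:ℝ) + (k:ℝ)*(A+3) + t*((n:ℝ) - (k:ℝ)*A - (k:ℝ)*t) := by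
    simp only [htdef]
    linear_combination (n:ℝ)*e1 - (k:ℝ)*hbr
  rw [key]
  clear_value A t
  clear key hf q12 q23 e1 e2 e3 hbr h1 h2 h3 hn1 hn2 hq hn1' hn2' hρ2lbB hρ2ubC hBe hCe
  clear hB0 hB1 hC0 hC1 hne12 hne23 hne13 hρ1ub hρ1neg hρ2neg hρ3pos hρ3lb hρ3ub
  clear h12 h23 ha hk1 hka htdef hρ2ne hρ2ub B C ρ₁ ρ₂ ρ₃
  -- linear facts
  have hAkt : (A-(k:ℝ))*t ≥ 0 := mul_nonneg (by linarith) ht0.le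
  have hkt1 : ((k:ℝ)-1)*t ≥ 0 := mul_nonneg (by linarith) ht0.le
  have h34 : (A-34)*t ≥ 0 := mul_nonneg (by linarith) ht0.le
  have ht1 : t < 1 := by linarith [h34, hρ2lb]
  have htt : t*t ≤ t := by
    have h' : t*t ≤ 1*t := mul_le_mul_of_nonneg_right ht1.le ht0.le
    linarith
  have hKt : (k:ℝ)*t < 1 := by linarith [hAkt, hρ2lb]
  have hpos : 0 < (n:ℝ) - (k:ℝ)*A - (k:ℝ)*t := by linarith [hn1R, hKt]
  have hub : (n:ℝ) - (k:ℝ)*A - (k:ℝ)*t < (A+3) - A*t - t^2 := by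
    linarith [hn2R, hkt1, htt, hρ2lb, hAkt]
  have hmul1 : 0 ≤ t*((n:ℝ) - (k:ℝ)*A - (k:ℝ)*t) := (mul_pos ht0 hpos).le
  have hmul2 : t*((n:ℝ) - (k:ℝ)*A - (k:ℝ)*t) < t*((A+3) - A*t - t^2) :=
    mul_lt_mul_of_pos_left hub ht0
  have hmul3 : t*((A+3) - A*t - t^2) = 1 := by linear_combination hroot
  rw [Int.floor_eq_iff]
  push_cast
  rw [← hAdef]
  constructor
  · linarith [hmul1]
  · linarith [hmul2, hmul3]
end

section
/- For integers a ≥ 34, 1 ≤ k ≤ a, and any integer n with -k ≤ n ≤ -⌊k/2⌋ - 1, the floor of ℓ₁₂(n) = (ρ₁+ρ₂)n - kρ₁ρ₂ equals -n. -/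
set_option maxHeartbeats 1000000 in
theorem simplest_cubic_left_line_floor_first (a k n : ℤ) (ha : 34 ≤ a)
    (hk1 : 1 ≤ k) (hka : k ≤ a) (ρ₁ ρ₂ ρ₃ : ℝ)
    (h12 : ρ₁ < ρ₂) (h23 : ρ₂ < ρ₃)
    (h1 : ρ₁^3 - a*ρ₁^2 - (a+3)*ρ₁ - 1 = 0)
    (h2 : ρ₂^3 - a*ρ₂^2 - (a+3)*ρ₂ - 1 = 0)
    (h3 : ρ₃^3 - a*ρ₃^2 - (a+3)*ρ₃ - 1 = 0)
    (hn1 : -k ≤ n) (hn2 : n ≤ -(k/2) - 1) :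
    ⌊(ρ₁+ρ₂)*(n:ℝ) - k*(ρ₁*ρ₂)⌋ = -n := by
  have hA : (34:ℝ) ≤ (a:ℝ) := by exact_mod_cast ha
  have hK1 : (1:ℝ) ≤ (k:ℝ) := by exact_mod_cast hk1
  have hKA : (k:ℝ) ≤ (a:ℝ) := by exact_mod_cast hka
  -- integer facts about n
  have hm1 : 1 ≤ -n := by omega
  have h2m : k + 1 ≤ 2*(-n) := by omega
  have hmk : -n ≤ k := by omega
  have hM1 : (1:ℝ) ≤ ((-n : ℤ):ℝ) := by exact_mod_cast hm1
  have h2M : (k:ℝ) + 1 ≤ 2*((-n:ℤ):ℝ) := by exact_mod_cast h2m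
  have hMK : ((-n:ℤ):ℝ) ≤ (k:ℝ) := by exact_mod_cast hmk
  -- Vieta
  have hne12 : ρ₁ - ρ₂ ≠ 0 := sub_ne_zero.mpr (ne_of_lt h12)
  have hne13 : ρ₁ - ρ₃ ≠ 0 := sub_ne_zero.mpr (ne_of_lt (h12.trans h23))
  have e12 : ρ₁^2 + ρ₁*ρ₂ + ρ₂^2 - a*(ρ₁+ρ₂) - (a+3) = 0 := by
    have key : (ρ₁ - ρ₂) * (ρ₁^2 + ρ₁*ρ₂ + ρ₂^2 - a*(ρ₁+ρ₂) - (a+3)) = 0 := by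
      linear_combination h1 - h2
    exact (mul_eq_zero.mp key).resolve_left hne12
  have e13 : ρ₁^2 + ρ₁*ρ₃ + ρ₃^2 - a*(ρ₁+ρ₃) - (a+3) = 0 := by
    have key : (ρ₁ - ρ₃) * (ρ₁^2 + ρ₁*ρ₃ + ρ₃^2 - a*(ρ₁+ρ₃) - (a+3)) = 0 := by
      linear_combination h1 - h3
    exact (mul_eq_zero.mp key).resolve_left hne13
  have hsum : ρ₁ + ρ₂ + ρ₃ = a := by
    have hne23 : ρ₂ - ρ₃ ≠ 0 := sub_ne_zero.mpr (ne_of_lt h23)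
    have key : (ρ₂ - ρ₃) * (ρ₁ + ρ₂ + ρ₃ - a) = 0 := by
      linear_combination e12 - e13
    have := (mul_eq_zero.mp key).resolve_left hne23
    linarith
  have hp : ρ₁ * ρ₂ = ρ₃^2 - a*ρ₃ - (a+3) := by
    linear_combination (ρ₁+ρ₂-ρ₃)*hsum - e12
  have hprod : (ρ₁*ρ₂)*ρ₃ = 1 := by linear_combination h3 + ρ₃ * hp
  have he2 : ρ₁*ρ₂ + ρ₁*ρ₃ + ρ₂*ρ₃ = -(a+3) := by
    linear_combination hp + ρ₃*hsum
  -- ρ₂ < 0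
  have hρ₂0 : ρ₂ < 0 := by
    by_contra hcon
    push_neg at hcon
    have hρ₃pos : 0 < ρ₃ := lt_of_le_of_lt hcon h23
    have hρ₁pos : 0 < ρ₁ := by
      by_contra h1pos
      push_neg at h1pos
      have h0 : (0:ℝ) ≤ ρ₂*ρ₃ := mul_nonneg hcon hρ₃pos.le
      have := mul_nonpos_of_nonpos_of_nonneg h1pos h0
      linarith [hprod, this]
    have hneg : (1+ρ₁)*(1+ρ₂)*(1+ρ₃) = -1 := by
      linear_combination hsum + he2 + hprod
    linarith [hneg, mul_pos (mul_pos (by linarith : (0:ℝ) < 1+ρ₁) (by linarith : (0:ℝ) < 1+ρ₂)) (by linarith : (0:ℝ) < 1+ρ₃)]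
  have hρ₁0 : ρ₁ < 0 := h12.trans hρ₂0
  -- ρ₃ > a+1
  have hFa1 : ((a:ℝ)+1-ρ₁)*((a:ℝ)+1-ρ₂)*((a:ℝ)+1-ρ₃) = -(2*(a:ℝ)+3) := by
    linear_combination (-((a:ℝ)+1)^2)*hsum + ((a:ℝ)+1)*he2 - hprod
  have hρ₃gt : (a:ℝ)+1 < ρ₃ := by
    by_contra hcon
    push_neg at hcon
    have hP := mul_pos (by linarith : (0:ℝ) < (a:ℝ)+1-ρ₁) (by linarith : (0:ℝ) < (a:ℝ)+1-ρ₂)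
    have := mul_nonneg hP.le (by linarith : (0:ℝ) ≤ (a:ℝ)+1-ρ₃)
    linarith [hFa1, this, hA]
  set A : ℝ := (a:ℝ) with hAdef
  set t : ℝ := ρ₃ - (A+1) with htdef
  have hts : ρ₃ = A + 1 + t := by simp only [htdef]; ring
  have ht0 : 0 < t := by simp only [htdef]; linarith
  have hρ₃pos : 0 < ρ₃ := by linarith
  have hA0 : (0:ℝ) < A := by linarith
  -- cubic in t
  have ht : t^3 + (2*A+3)*t^2 + A*(A+3)*t = 2*A+3 := by
    simp only [htdef]; linear_combination h3
  have hnn : (0:ℝ) ≤ (2*A+3)*t^2 := mul_nonneg (by linarith) (sq_nonneg t)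
  have htub : A*(A+3)*t ≤ 2*A+3 := by linarith [ht, pow_pos ht0 3, hnn]
  have hat0 : 0 < A*t := mul_pos hA0 ht0
  have hat3 : A*t ≤ 3 := by
    by_contra h
    push_neg at h
    have h' : A*3 < A*(A*t) := (mul_lt_mul_iff_right₀ hA0).mpr h
    linarith [htub, h', hat0]
  have hsq : A^2*t^2 ≤ 9 :=
    by linarith [mul_le_mul hat3 hat3 hat0.le (by norm_num : (0:ℝ) ≤ 3)]
  have hAt2a : 34*(A*t^2) ≤ A^2*t^2 := by
    have := mul_nonneg (mul_nonneg (by linarith : (0:ℝ) ≤ A - 34) hA0.le) (sq_nonneg t)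
    linarith [this]
  have hAt2b : 1156*t^2 ≤ A^2*t^2 := by
    have := mul_nonneg (mul_nonneg (by linarith : (0:ℝ) ≤ A - 34) (by linarith : (0:ℝ) ≤ A + 34)) (sq_nonneg t)
    linarith [this]
  have hAt3 : A*t^3 ≤ 3*t^2 := by
    have := mul_nonneg (by linarith : (0:ℝ) ≤ 3 - A*t) (sq_nonneg t)
    linarith [this]
  have htlb : 2*A^2+3*A-20 ≤ A^2*(A+3)*t := by
    have hA_ht : A*t^3 + 2*(A^2*t^2) + 3*(A*t^2) + A^2*(A+3)*t = 2*A^2+3*A := by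
      linear_combination A*ht
    linarith [hA_ht, hAt3, hsq, hAt2a, hAt2b]
  set q : ℝ := ρ₃ * t with hqdef
  have hq0 : 0 < q := mul_pos hρ₃pos ht0
  have hq_eq : q = (A+1)*t + t^2 := by rw [hqdef, hts]; ring
  have hq2 : q ≤ 2 := by
    have hh1 : (A+1)*(A*(A+3)*t) ≤ (A+1)*(2*A+3) :=
      mul_le_mul_of_nonneg_left htub (by linarith)
    have key : (A*(A+3))*q = (A+1)*(A*(A+3)*t) + (A^2*t^2 + 3*(A*t^2)) := by
      rw [hq_eq]; ring
    have h2' : (A*(A+3))*q ≤ (A*(A+3))*2 := by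
      rw [key]; linarith [hh1, hsq, hAt2a, hA]
    exact le_of_mul_le_mul_left h2' (by positivity)
  have hqlb : 2*A ≤ (A+1) * q := by
    have e1 : (A+1)*q = (A+1)^2*t + (A+1)*t^2 := by rw [hq_eq]; ring
    have hD : (0:ℝ) < A^2*(A+3) := by positivity
    have h1' := mul_le_mul_of_nonneg_left htlb (sq_nonneg (A+1))
    have h34 : (0:ℝ) ≤ A - 34 := by linarith
    have h2' : (A^2*(A+3))*(2*A) ≤ (A+1)^2*(2*A^2+3*A-20) := by
      linarith [h34, mul_nonneg h34 h34, mul_nonneg (mul_nonneg h34 h34) h34]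
    have h3' : (A^2*(A+3))*(2*A) ≤ (A^2*(A+3))*((A+1)^2*t) := by linarith [h1', h2']
    have h4' : 2*A ≤ (A+1)^2*t := le_of_mul_le_mul_left h3' hD
    linarith [e1, h4', mul_nonneg (by linarith : (0:ℝ) ≤ A+1) (sq_nonneg t)]
  set M : ℝ := ((-n:ℤ):ℝ) with hMdef
  have hMq : (k:ℝ) ≤ M * q := by
    have hkq : (0:ℝ) ≤ (A - k)*(2 - q) := mul_nonneg (by linarith) (by linarith)
    have h1' : 2*(k:ℝ) ≤ ((k:ℝ)+1) * q := by linarith [hqlb, hkq]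
    have h2' : (0:ℝ) ≤ (2*M - ((k:ℝ)+1)) * q := mul_nonneg (by linarith) hq0.le
    linarith [h1', h2']
  have hMq2 : M * q < ρ₃ + (k:ℝ) := by
    have h1' : (0:ℝ) ≤ ((k:ℝ) - M)*q := mul_nonneg (by linarith) hq0.le
    have h2' : (0:ℝ) ≤ (k:ℝ)*(2 - q) := mul_nonneg (by linarith) (by linarith)
    linarith [h1', h2', hρ₃gt, hKA]
  have hNM : (n:ℝ) = -M := by simp [hMdef]
  have hkey : ((ρ₁+ρ₂)*(n:ℝ) - k*(ρ₁*ρ₂) - M) * ρ₃ = M*q - (k:ℝ) := by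
    rw [hNM, hqdef, htdef]
    linear_combination (-(k:ℝ))*hprod - (M*ρ₃)*hsum
  have hlow : M ≤ (ρ₁+ρ₂)*(n:ℝ) - k*(ρ₁*ρ₂) := by
    by_contra h
    push_neg at h
    have : ((ρ₁+ρ₂)*(n:ℝ) - k*(ρ₁*ρ₂) - M) * ρ₃ < 0 :=
      mul_neg_of_neg_of_pos (by linarith) hρ₃pos
    linarith [hkey, hMq]
  have hhigh : (ρ₁+ρ₂)*(n:ℝ) - k*(ρ₁*ρ₂) < M + 1 := by
    by_contra h
    push_neg at h
    have h1 : (1:ℝ)*ρ₃ ≤ ((ρ₁+ρ₂)*(n:ℝ) - k*(ρ₁*ρ₂) - M) * ρ₃ :=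
      mul_le_mul_of_nonneg_right (by linarith) hρ₃pos.le
    linarith [hkey, hMq2, h1]
  rw [Int.floor_eq_iff]
  constructor
  · exact_mod_cast hlow
  · push_cast at hhigh ⊢
    push_cast [hMdef] at hhigh
    linarith
end

section
/- For integers a ≥ 34, 1 ≤ k ≤ a, and any integer n with -⌊k/2⌋ ≤ n ≤ -1, the floor of ℓ₁₂(n) = (ρ₁+ρ₂)n - kρ₁ρ₂ equals -n - 1. -/
set_option maxHeartbeats 1000000


theorem simplest_cubic_left_line_floor_second (a k n : ℤ) (ha : 34 ≤ a)
    (hk1 : 1 ≤ k) (hka : k ≤ a) (ρ₁ ρ₂ ρ₃ : ℝ)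
    (h12 : ρ₁ < ρ₂) (h23 : ρ₂ < ρ₃)
    (h1 : ρ₁^3 - a*ρ₁^2 - (a+3)*ρ₁ - 1 = 0)
    (h2 : ρ₂^3 - a*ρ₂^2 - (a+3)*ρ₂ - 1 = 0)
    (h3 : ρ₃^3 - a*ρ₃^2 - (a+3)*ρ₃ - 1 = 0)
    (hn1 : -(k/2) ≤ n) (hn2 : n ≤ -1) :
    ⌊(ρ₁+ρ₂)*(n:ℝ) - k*(ρ₁*ρ₂)⌋ = -n - 1 := by
  have haR : (34:ℝ) ≤ (a:ℝ) := by exact_mod_cast ha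
  have hk1R : (1:ℝ) ≤ (k:ℝ) := by exact_mod_cast hk1
  have hkaR : (k:ℝ) ≤ (a:ℝ) := by exact_mod_cast hka
  have hmZ : 1 ≤ -n := by omega
  have h2mZ : 2*(-n) ≤ k := by omega
  have hmR : (1:ℝ) ≤ -(n:ℝ) := by exact_mod_cast hmZ
  have h2mR : 2*(-(n:ℝ)) ≤ (k:ℝ) := by exact_mod_cast h2mZ
  have hne12 : ρ₁ - ρ₂ ≠ 0 := sub_ne_zero.mpr h12.ne
  have hne13 : ρ₁ - ρ₃ ≠ 0 := sub_ne_zero.mpr (h12.trans h23).ne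
  have hne23 : ρ₂ - ρ₃ ≠ 0 := sub_ne_zero.mpr h23.ne
  have q12 : ρ₁^2 + ρ₁*ρ₂ + ρ₂^2 - a*(ρ₁+ρ₂) - (a+3) = 0 := by
    apply mul_left_cancel₀ hne12
    linear_combination h1 - h2
  have q13 : ρ₁^2 + ρ₁*ρ₃ + ρ₃^2 - a*(ρ₁+ρ₃) - (a+3) = 0 := by
    apply mul_left_cancel₀ hne13
    linear_combination h1 - h3
  have q23 : ρ₂^2 + ρ₂*ρ₃ + ρ₃^2 - a*(ρ₂+ρ₃) - (a+3) = 0 := by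
    apply mul_left_cancel₀ hne23
    linear_combination h2 - h3
  have esum : ρ₁ + ρ₂ + ρ₃ = a := by
    apply mul_left_cancel₀ hne12
    linear_combination q13 - q23
  have hp12 : ρ₁*ρ₂ = ρ₃^2 - a*ρ₃ - (a+3) := by
    linear_combination -q12 + (ρ₁+ρ₂-ρ₃)*esum
  have hprod : ρ₁*ρ₂*ρ₃ = 1 := by
    linear_combination h3 + ρ₃*hp12
  have e2 : ρ₁*ρ₂ + ρ₁*ρ₃ + ρ₂*ρ₃ = -(a+3) := by
    linear_combination hp12 + ρ₃*esum
  have hfa1 : ((a:ℝ)+1-ρ₁)*((a:ℝ)+1-ρ₂)*((a:ℝ)+1-ρ₃) = -(2*a+3) := by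
    linear_combination (-((a:ℝ)+1)^2)*esum + ((a:ℝ)+1)*e2 - hprod
  have hfa2 : ((a:ℝ)+2-ρ₁)*((a:ℝ)+2-ρ₂)*((a:ℝ)+2-ρ₃) = (a+2)*(a+1)-1 := by
    linear_combination (-((a:ℝ)+2)^2)*esum + ((a:ℝ)+2)*e2 - hprod
  have hρ₃gt : (a:ℝ)+1 < ρ₃ := by
    by_contra h
    push_neg at h
    have f1 : (0:ℝ) ≤ (a:ℝ)+1-ρ₁ := by linarith
    have f2 : (0:ℝ) ≤ (a:ℝ)+1-ρ₂ := by linarith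
    have f3 : (0:ℝ) ≤ (a:ℝ)+1-ρ₃ := by linarith
    nlinarith only [mul_nonneg (mul_nonneg f1 f2) f3, hfa1, haR]
  have hρ₃pos : (0:ℝ) < ρ₃ := by linarith
  have hρ₂lt : ρ₂ < (a:ℝ)+1 := by
    by_contra h
    push_neg at h
    have hρ1neg : ρ₁ < 0 := by linarith [esum]
    have hρ2pos : (0:ℝ) < ρ₂ := by linarith
    have h' : ρ₁*ρ₂*ρ₃ < 0 := by
      rw [mul_assoc]; exact mul_neg_of_neg_of_pos hρ1neg (mul_pos hρ2pos hρ₃pos)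
    linarith only [h', hprod]
  have hρ₃lt : ρ₃ < (a:ℝ)+2 := by
    by_contra h
    push_neg at h
    have f1 : (0:ℝ) < (a:ℝ)+2-ρ₁ := by linarith
    have f2 : (0:ℝ) < (a:ℝ)+2-ρ₂ := by linarith
    have f3 : (a:ℝ)+2-ρ₃ ≤ 0 := by linarith
    nlinarith only [mul_nonpos_of_nonneg_of_nonpos (le_of_lt (mul_pos f1 f2)) f3, hfa2, haR]
  have hPu : (ρ₁*ρ₂)*ρ₃ = 1 := hprod
  have hP : (0:ℝ) < ρ₁*ρ₂ := by nlinarith only [hPu, hρ₃pos]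
  have hS : ρ₁ + ρ₂ = (a:ℝ) - ρ₃ := by linarith [esum]
  -- step A
  have hA : ρ₃^2 - ((a:ℝ)+2)*ρ₃ - 1 < 0 := by
    nlinarith only [mul_lt_mul_of_pos_left hρ₃lt hρ₃pos]
  have hB : (0:ℝ) < ρ₃^2 - ((a:ℝ)+1)*ρ₃ - 1 := by
    nlinarith only [h3, hA, hρ₃pos]
  have htu : (ρ₃ - (a:ℝ) - 1)*ρ₃ < 2 := by
    nlinarith only [h3, hB, hρ₃pos]
  have ht : (0:ℝ) < ρ₃ - (a:ℝ) - 1 := by linarith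
  have hkP : (k:ℝ)*(ρ₁*ρ₂) < 1 := by
    nlinarith only [mul_pos (show (0:ℝ) < ρ₃ - (k:ℝ) by linarith) hP, hPu]
  have hSn : (ρ₁+ρ₂)*(n:ℝ) = ((a:ℝ)-ρ₃)*(n:ℝ) := by rw [hS]
  rw [Int.floor_eq_iff]
  push_cast
  constructor
  · nlinarith only [mul_pos ht (show (0:ℝ) < -(n:ℝ) by linarith), hkP, hSn]
  · -- (ρ₁+ρ₂)*n - k*P < -n : equiv t*(-n) < k*P, multiply by ρ₃
    have key : (ρ₃ - (a:ℝ) - 1)*(-(n:ℝ))*ρ₃ < (k:ℝ) := by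
      nlinarith only [mul_lt_mul_of_pos_right htu (show (0:ℝ) < -(n:ℝ) by linarith), h2mR]
    have hkPρ : (k:ℝ)*(ρ₁*ρ₂)*ρ₃ = k := by linear_combination (k:ℝ)*hPu
    have hgoal : ((ρ₃ - (a:ℝ) - 1)*(-(n:ℝ)) - k*(ρ₁*ρ₂))*ρ₃ < 0 := by
      nlinarith only [key, hkPρ]
    have hdiv : (ρ₃ - (a:ℝ) - 1)*(-(n:ℝ)) - k*(ρ₁*ρ₂) < 0 := by
      by_contra hcon
      push_neg at hcon
      nlinarith only [mul_nonneg hcon hρ₃pos.le, hgoal]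
    nlinarith only [hdiv, hSn]
end

section
/- For integers a ≥ 34, 1 ≤ k ≤ a, and any integer n with 0 ≤ n ≤ k - 1, the floor of ℓ₂₃(n) = (ρ₂+ρ₃)n - kρ₂ρ₃ equals (a+1)n + k - 1. -/
set_option maxHeartbeats 1000000 in
theorem simplest_cubic_right_line_floor_first (a k n : ℤ) (ha : 34 ≤ a)
    (hk1 : 1 ≤ k) (hka : k ≤ a) (ρ₁ ρ₂ ρ₃ : ℝ)
    (h12 : ρ₁ < ρ₂) (h23 : ρ₂ < ρ₃)
    (h1 : ρ₁^3 - a*ρ₁^2 - (a+3)*ρ₁ - 1 = 0)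
    (h2 : ρ₂^3 - a*ρ₂^2 - (a+3)*ρ₂ - 1 = 0)
    (h3 : ρ₃^3 - a*ρ₃^2 - (a+3)*ρ₃ - 1 = 0)
    (hn1 : 0 ≤ n) (hn2 : n ≤ k - 1) :
    ⌊(ρ₂+ρ₃)*(n:ℝ) - k*(ρ₂*ρ₃)⌋ = (a+1)*n + k - 1 := by
  have ha' : (34:ℝ) ≤ (a:ℝ) := by exact_mod_cast ha
  have hk1' : (1:ℝ) ≤ (k:ℝ) := by exact_mod_cast hk1
  have hka' : (k:ℝ) ≤ (a:ℝ) := by exact_mod_cast hka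
  have hn1' : (0:ℝ) ≤ (n:ℝ) := by exact_mod_cast hn1
  have hn2' : (n:ℝ) ≤ (k:ℝ) - 1 := by
    have : (n:ℝ) ≤ ((k-1 : ℤ):ℝ) := by exact_mod_cast hn2
    push_cast at this; linarith
  -- pairwise relations
  have e12 : ρ₁^2 + ρ₁*ρ₂ + ρ₂^2 - a*(ρ₁+ρ₂) - (a+3) = 0 := by
    have h : (ρ₁ - ρ₂) * (ρ₁^2 + ρ₁*ρ₂ + ρ₂^2 - a*(ρ₁+ρ₂) - (a+3)) = 0 := by
      linear_combination h1 - h2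
    rcases mul_eq_zero.mp h with h' | h'
    · exact absurd (sub_eq_zero.mp h') (ne_of_lt h12)
    · exact h'
  have e13 : ρ₁^2 + ρ₁*ρ₃ + ρ₃^2 - a*(ρ₁+ρ₃) - (a+3) = 0 := by
    have h : (ρ₁ - ρ₃) * (ρ₁^2 + ρ₁*ρ₃ + ρ₃^2 - a*(ρ₁+ρ₃) - (a+3)) = 0 := by
      linear_combination h1 - h3
    rcases mul_eq_zero.mp h with h' | h'
    · exact absurd (sub_eq_zero.mp h') (ne_of_lt (lt_trans h12 h23))
    · exact h'
  -- Vieta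
  have hs : ρ₁ + ρ₂ + ρ₃ = a := by
    have h : (ρ₂ - ρ₃) * (ρ₁ + ρ₂ + ρ₃ - a) = 0 := by
      linear_combination e12 - e13
    rcases mul_eq_zero.mp h with h' | h'
    · exact absurd (sub_eq_zero.mp h') (ne_of_lt h23)
    · linarith [sub_eq_zero.mp h']
  have hp12 : ρ₁*ρ₂ = ρ₃^2 - a*ρ₃ - (a+3) := by
    linear_combination (ρ₁+ρ₂-ρ₃) * hs - e12
  have hq : ρ₁*ρ₂*ρ₃ = 1 := by
    linear_combination ρ₃ * hp12 + h3
  have hp : ρ₁*ρ₂ + ρ₁*ρ₃ + ρ₂*ρ₃ = -((a:ℝ)+3) := by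
    linear_combination hp12 + ρ₃ * hs
  have hfact : ∀ x : ℝ, (x-ρ₁)*(x-ρ₂)*(x-ρ₃) = x^3 - a*x^2 - (a+3)*x - 1 := by
    intro x
    linear_combination (-(x^2)) * hs + x * hp - hq
  -- ρ₃ > a + 1
  have hρ3 : (a:ℝ) + 1 < ρ₃ := by
    by_contra hc
    push_neg at hc
    have f1 : ((a:ℝ)+1-ρ₁)*((a:ℝ)+1-ρ₂)*((a:ℝ)+1-ρ₃) = -(2*(a:ℝ)+3) := by
      linear_combination hfact ((a:ℝ)+1)
    have h1' : 0 < (a:ℝ)+1-ρ₁ := by linarith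
    have h2' : 0 < (a:ℝ)+1-ρ₂ := by linarith
    have h3' : 0 ≤ (a:ℝ)+1-ρ₃ := by linarith
    nlinarith [mul_nonneg (mul_nonneg h1'.le h2'.le) h3']
  -- f(-1) = 1
  have fm1 : (-1-ρ₁)*(-1-ρ₂)*(-1-ρ₃) = 1 := by
    linear_combination hfact (-1)
  have h3neg : -1 - ρ₃ < 0 := by linarith
  have hρ1 : ρ₁ < -1 := by
    by_contra hc
    push_neg at hc
    have hx : -1 - ρ₁ ≤ 0 := by linarith
    have hy : -1 - ρ₂ < 0 := by linarith
    nlinarith [fm1, mul_pos_of_neg_of_neg hy h3neg, hx]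
  have hρ2 : -1 < ρ₂ := by
    by_contra hc
    push_neg at hc
    have hx : 0 ≤ -1 - ρ₁ := by linarith
    have hy : 0 ≤ -1 - ρ₂ := by linarith
    nlinarith [fm1, mul_nonneg hx hy, h3neg]
  -- lower bound for ρ₁ :  (a+1)ρ₁ > -(a+2)
  have hlow : -((a:ℝ)+2) < ((a:ℝ)+1)*ρ₁ := by
    by_contra hc
    push_neg at hc
    have fc : (-((a:ℝ)+2) - ((a:ℝ)+1)*ρ₁) * (-((a:ℝ)+2) - ((a:ℝ)+1)*ρ₂) *
        (-((a:ℝ)+2) - ((a:ℝ)+1)*ρ₃) = -(2*(a:ℝ)+3) := by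
      linear_combination (-(((a:ℝ)+1)*((a:ℝ)+2)^2)) * hs +
        (-(((a:ℝ)+1)^2*((a:ℝ)+2))) * hp + (-(((a:ℝ)+1)^3)) * hq
    have h1' : 0 ≤ -((a:ℝ)+2) - ((a:ℝ)+1)*ρ₁ := by linarith
    have h2' : -((a:ℝ)+2) - ((a:ℝ)+1)*ρ₂ < 0 := by nlinarith
    have h3' : -((a:ℝ)+2) - ((a:ℝ)+1)*ρ₃ < 0 := by nlinarith
    nlinarith [mul_nonneg h1' (mul_pos_of_neg_of_neg h2' h3').le]
  -- key facts for final inequalities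
  have hs23 : ρ₂ + ρ₃ = (a:ℝ) - ρ₁ := by linarith
  have hq23 : ρ₂ * ρ₃ * ρ₁ = 1 := by linear_combination hq
  have hρ1neg : (0:ℝ) < -ρ₁ := by linarith
  -- n * (a+1) * (-ρ₁) < k * (a+1)
  have hkey : (n:ℝ) * (((a:ℝ)+1) * (-ρ₁)) < (k:ℝ) * ((a:ℝ)+1) := by
    have h1' : ((a:ℝ)+1) * (-ρ₁) < (a:ℝ)+2 := by linarith
    have h2' : (n:ℝ) * (((a:ℝ)+1) * (-ρ₁)) ≤ (n:ℝ) * ((a:ℝ)+2) :=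
      mul_le_mul_of_nonneg_left h1'.le hn1'
    nlinarith
  rw [Int.floor_eq_iff]
  constructor
  · push_cast
    rw [hs23]
    have hterm : 0 ≤ (1+ρ₁)*ρ₁*(n:ℝ) := by
      have h0 : 0 ≤ (1+ρ₁)*ρ₁ := by nlinarith
      exact mul_nonneg h0 hn1'
    have hterm2 : 0 ≤ (k:ℝ) + ((k:ℝ)-1)*ρ₁ := by
      have h1' : ((k:ℝ)-1) * (((a:ℝ)+1) * ρ₁) ≥ ((k:ℝ)-1) * (-((a:ℝ)+2)) :=
        mul_le_mul_of_nonneg_left hlow.le (by linarith)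
      nlinarith
    have hmul : 0 ≤ (-ρ₁) * ((((a:ℝ)-ρ₁))*(n:ℝ) - (k:ℝ)*(ρ₂*ρ₃)
        - (((a:ℝ)+1)*(n:ℝ) + (k:ℝ) - 1)) := by
      have hid : (-ρ₁) * ((((a:ℝ)-ρ₁))*(n:ℝ) - (k:ℝ)*(ρ₂*ρ₃)
          - (((a:ℝ)+1)*(n:ℝ) + (k:ℝ) - 1))
          = (1+ρ₁)*ρ₁*(n:ℝ) + ((k:ℝ) + ((k:ℝ)-1)*ρ₁) := by
        linear_combination (k:ℝ) * hq23
      rw [hid]; linarith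
    have h0 : (-ρ₁) * 0 ≤ (-ρ₁) * ((((a:ℝ)-ρ₁))*(n:ℝ) - (k:ℝ)*(ρ₂*ρ₃)
        - (((a:ℝ)+1)*(n:ℝ) + (k:ℝ) - 1)) := by rw [mul_zero]; exact hmul
    have := le_of_mul_le_mul_left h0 hρ1neg
    linarith
  · push_cast
    rw [hs23]
    have hpos : 0 < ρ₁*(n:ℝ) + (k:ℝ) := by
      have h1 : 0 < ((a:ℝ)+1) * (ρ₁*(n:ℝ) + (k:ℝ)) := by
        have hr : ((a:ℝ)+1) * (ρ₁*(n:ℝ) + (k:ℝ))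
            = (k:ℝ)*((a:ℝ)+1) - (n:ℝ)*(((a:ℝ)+1)*(-ρ₁)) := by ring
        rw [hr]; linarith [hkey]
      have h0 : ((a:ℝ)+1)*0 < ((a:ℝ)+1) * (ρ₁*(n:ℝ) + (k:ℝ)) := by
        rw [mul_zero]; exact h1
      exact lt_of_mul_lt_mul_left h0 (by linarith : (0:ℝ) ≤ (a:ℝ)+1)
    have hneg : (1+ρ₁) * (ρ₁*(n:ℝ) + (k:ℝ)) < 0 :=
      mul_neg_of_neg_of_pos (by linarith) hpos
    have hmul2 : 0 < (-ρ₁) * ((((a:ℝ)+1)*(n:ℝ) + (k:ℝ) - 1 + 1)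
        - ((((a:ℝ)-ρ₁))*(n:ℝ) - (k:ℝ)*(ρ₂*ρ₃))) := by
      have hid : (-ρ₁) * ((((a:ℝ)+1)*(n:ℝ) + (k:ℝ) - 1 + 1)
          - ((((a:ℝ)-ρ₁))*(n:ℝ) - (k:ℝ)*(ρ₂*ρ₃)))
          = -((1+ρ₁) * (ρ₁*(n:ℝ) + (k:ℝ))) := by
        linear_combination (-(k:ℝ)) * hq23
      rw [hid]; linarith
    have h0 : (-ρ₁) * 0 < (-ρ₁) * ((((a:ℝ)+1)*(n:ℝ) + (k:ℝ) - 1 + 1)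
        - ((((a:ℝ)-ρ₁))*(n:ℝ) - (k:ℝ)*(ρ₂*ρ₃))) := by rw [mul_zero]; exact hmul2
    have := lt_of_mul_lt_mul_left h0 hρ1neg.le
    linarith
end

section
/- For integers a ≥ 34, 1 ≤ k ≤ a, integers 1 ≤ i ≤ ⌈k/2⌉, and any integer n with (k-1) + (i-1)(a+1) + 1 ≤ n ≤ (k-1) + i(a+1), the floor of ℓ₂₃(n) = (ρ₂+ρ₃)n - kρ₂ρ₃ equals (a+1)n + (k-1) + i. -/
private lemma eps_upper (A ε : ℝ) (hA : 34 ≤ A) (hε0 : 0 < ε)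
    (hg : ε^3 + (A+3)*ε^2 + A*ε = 1) : (A+1)*ε < 1 := by
  by_contra h
  push_neg at h
  have P1 : 0 ≤ ((A+1)*ε - 1)*ε := mul_nonneg (sub_nonneg.2 h) hε0.le
  nlinarith [hg, P1, h, mul_pos hε0 hε0, mul_pos (mul_pos hε0 hε0) hε0]

private lemma eps_lower (A ε : ℝ) (hA : 34 ≤ A) (hε0 : 0 < ε)
    (hg : ε^3 + (A+3)*ε^2 + A*ε = 1) (hεs : 35*ε < 1) : 1 < (A+2)*ε := by
  by_contra h
  push_neg at h
  have p2 : A*ε^2 ≤ (1-2*ε)*ε := by nlinarith [mul_nonneg (sub_nonneg.2 h) hε0.le]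
  have p3 : ε^2 ≤ ε/35 := by nlinarith [mul_nonneg (sub_nonneg.2 hεs.le) hε0.le]
  have p4 : ε^3 ≤ ε^2/35 := by
    nlinarith [mul_nonneg (sub_nonneg.2 hεs.le) (mul_nonneg hε0.le hε0.le)]
  nlinarith [hg, p2, p3, p4, hε0]

private lemma num_lower (A K I N ε : ℝ) (hA : 34 ≤ A) (hK1 : 1 ≤ K) (hKA : K ≤ A)
    (hI1 : 1 ≤ I) (h2I : 2*I ≤ K+1) (hε0 : 0 < ε)
    (hg : ε^3 + (A+3)*ε^2 + A*ε = 1) (hεu : (A+1)*ε < 1)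
    (hn1 : K + (I-1)*(A+1) ≤ N) :
    0 ≤ ε*(1+ε)*N - K*ε - (I-1)*(1+ε) := by
  have h1e : (0:ℝ) < 1 + ε := by linarith
  have hIε : (I-1)*ε ≤ 1 := by
    nlinarith [mul_nonneg (show (0:ℝ) ≤ A+1-(I-1) by nlinarith) hε0.le]
  have hgI : (I-1)*(ε^3 + (A+3)*ε^2 + A*ε) = (I-1) := by rw [hg]; ring
  nlinarith [mul_le_mul_of_nonneg_left hn1 (mul_pos hε0 h1e).le, hgI,
    mul_nonneg (show (0:ℝ) ≤ K - 1 - 2*(I-1) by linarith) (mul_nonneg hε0.le hε0.le),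
    mul_nonneg (sub_nonneg.2 hIε) (mul_nonneg hε0.le hε0.le)]

private lemma num_upper (A K I N ε : ℝ) (hA : 34 ≤ A) (hK1 : 1 ≤ K) (hKA : K ≤ A)
    (hI1 : 1 ≤ I) (hε0 : 0 < ε)
    (hg : ε^3 + (A+3)*ε^2 + A*ε = 1) (hεu : (A+1)*ε < 1)
    (hn2 : N ≤ K - 1 + I*(A+1)) :
    ε*(1+ε)*N - K*ε - I*(1+ε) < 0 := by
  have h1e : (0:ℝ) < 1 + ε := by linarith
  have hKε : K*ε < 1 := by
    nlinarith [mul_nonneg (sub_nonneg.2 hKA) hε0.le]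
  have hgI : I*(ε^3 + (A+3)*ε^2 + A*ε) = I := by rw [hg]; ring
  nlinarith [mul_le_mul_of_nonneg_left hn2 (mul_pos hε0 h1e).le, hgI,
    mul_nonneg (sub_nonneg.2 hKε.le) hε0.le,
    mul_pos hε0 hε0,
    mul_nonneg (mul_nonneg (show (0:ℝ) ≤ I by linarith) hε0.le) hε0.le,
    mul_nonneg (mul_nonneg (mul_nonneg (show (0:ℝ) ≤ I by linarith) hε0.le) hε0.le) hε0.le]

set_option maxHeartbeats 1000000 in
theorem simplest_cubic_right_line_floor_middle (a k n i : ℤ) (ha : 34 ≤ a)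
    (hk1 : 1 ≤ k) (hka : k ≤ a) (ρ₁ ρ₂ ρ₃ : ℝ)
    (h12 : ρ₁ < ρ₂) (h23 : ρ₂ < ρ₃)
    (h1 : ρ₁^3 - a*ρ₁^2 - (a+3)*ρ₁ - 1 = 0)
    (h2 : ρ₂^3 - a*ρ₂^2 - (a+3)*ρ₂ - 1 = 0)
    (h3 : ρ₃^3 - a*ρ₃^2 - (a+3)*ρ₃ - 1 = 0)
    (hi1 : 1 ≤ i) (hi2 : i ≤ (k+1)/2)
    (hn1 : (k-1) + (i-1)*(a+1) + 1 ≤ n) (hn2 : n ≤ (k-1) + i*(a+1)) :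
    ⌊(ρ₂+ρ₃)*(n:ℝ) - k*(ρ₂*ρ₃)⌋ = (a+1)*n + (k-1) + i := by
  have hA : (34:ℝ) ≤ (a:ℝ) := by exact_mod_cast ha
  have hK1 : (1:ℝ) ≤ (k:ℝ) := by exact_mod_cast hk1
  have hKA : (k:ℝ) ≤ (a:ℝ) := by exact_mod_cast hka
  have hI1 : (1:ℝ) ≤ (i:ℝ) := by exact_mod_cast hi1
  have h2i : 2*i ≤ k+1 := by omega
  have h2I : 2*(i:ℝ) ≤ (k:ℝ)+1 := by exact_mod_cast h2i
  have hn1' : (k:ℝ) + ((i:ℝ)-1)*((a:ℝ)+1) ≤ (n:ℝ) := by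
    have h : ((k-1) + (i-1)*(a+1) + 1 : ℝ) ≤ (n:ℝ) := by exact_mod_cast hn1
    push_cast at h; linarith
  have hn2' : (n:ℝ) ≤ (k:ℝ) - 1 + (i:ℝ)*((a:ℝ)+1) := by
    have h : (n:ℝ) ≤ ((k-1) + i*(a+1) : ℝ) := by exact_mod_cast hn2
    push_cast at h; linarith
  -- Vieta
  have hd12 : ρ₁ - ρ₂ ≠ 0 := sub_ne_zero.mpr (ne_of_lt h12)
  have hd23 : ρ₂ - ρ₃ ≠ 0 := sub_ne_zero.mpr (ne_of_lt h23)
  have hd13 : ρ₁ - ρ₃ ≠ 0 := sub_ne_zero.mpr (ne_of_lt (h12.trans h23))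
  have q12 : ρ₁^2 + ρ₁*ρ₂ + ρ₂^2 - a*(ρ₁+ρ₂) - (a+3) = 0 := by
    have h : (ρ₁ - ρ₂) * (ρ₁^2 + ρ₁*ρ₂ + ρ₂^2 - a*(ρ₁+ρ₂) - (a+3)) = 0 := by
      linear_combination h1 - h2
    exact (mul_eq_zero.mp h).resolve_left hd12
  have q13 : ρ₁^2 + ρ₁*ρ₃ + ρ₃^2 - a*(ρ₁+ρ₃) - (a+3) = 0 := by
    have h : (ρ₁ - ρ₃) * (ρ₁^2 + ρ₁*ρ₃ + ρ₃^2 - a*(ρ₁+ρ₃) - (a+3)) = 0 := by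
      linear_combination h1 - h3
    exact (mul_eq_zero.mp h).resolve_left hd13
  have e1 : ρ₁ + ρ₂ + ρ₃ = a := by
    have h : (ρ₂ - ρ₃) * (ρ₁ + ρ₂ + ρ₃ - a) = 0 := by
      linear_combination q12 - q13
    have h' := (mul_eq_zero.mp h).resolve_left hd23
    linarith [sub_eq_zero.mp h']
  have e2 : ρ₁*ρ₂ + ρ₁*ρ₃ + ρ₂*ρ₃ = -(a+3) := by
    linear_combination (ρ₁+ρ₂)*e1 - q12
  have e3 : ρ₁*ρ₂*ρ₃ = 1 := by
    linear_combination h1 - ρ₁^2*e1 + ρ₁*e2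
  have keym1 : (-1-ρ₁)*(-1-ρ₂)*(-1-ρ₃) = 1 := by
    linear_combination -e1 - e2 - e3
  -- ρ₃ > 0
  have hρ3pos : 0 < ρ₃ := by
    by_contra h
    push_neg at h
    nlinarith [mul_nonneg (mul_pos (show (0:ℝ) < -ρ₁ by linarith)
      (show (0:ℝ) < -ρ₂ by linarith)).le (show (0:ℝ) ≤ -ρ₃ by linarith), e3]
  -- (-1-ρ₁)(-1-ρ₂) < 0
  have hq : (-1-ρ₁)*(-1-ρ₂) < 0 := by
    by_contra h
    push_neg at h
    nlinarith [mul_nonneg h (show (0:ℝ) ≤ 1+ρ₃ by linarith), keym1]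
  have hρ1 : ρ₁ < -1 := by
    by_contra h
    push_neg at h
    nlinarith [mul_nonneg (show (0:ℝ) ≤ 1+ρ₁ by linarith)
      (show (0:ℝ) ≤ 1+ρ₂ by linarith)]
  -- cubic for ε
  have hg : (-1-ρ₁)^3 + ((a:ℝ)+3)*(-1-ρ₁)^2 + (a:ℝ)*(-1-ρ₁) = 1 := by
    linear_combination -h1
  set ε : ℝ := -1 - ρ₁ with hεdef
  have hε0 : 0 < ε := by rw [hεdef]; linarith
  have h1e : (0:ℝ) < 1 + ε := by linarith
  have hεu : ((a:ℝ)+1)*ε < 1 := eps_upper _ _ hA hε0 hg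
  have hsum : ρ₂ + ρ₃ = (a:ℝ) + 1 + ε := by rw [hεdef]; linarith
  have hprod : ρ₂ * ρ₃ = -1/(1+ε) := by
    field_simp
    linear_combination -e3 + ρ₂*ρ₃*hεdef
  clear h1 h2 h3 q12 q13 e1 e2 e3 keym1 hq hd12 hd23 hd13
  rw [hsum, hprod]
  rw [Int.floor_eq_iff]
  push_cast
  constructor
  · have hnum1 := num_lower (a:ℝ) (k:ℝ) (i:ℝ) (n:ℝ) ε hA hK1 hKA hI1 h2I hε0 hg hεu hn1'
    have heq : ((a:ℝ)+1+ε)*(n:ℝ) - (k:ℝ)*(-1/(1+ε)) - (((a:ℝ)+1)*(n:ℝ) + ((k:ℝ)-1) + (i:ℝ))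
        = (ε*(1+ε)*(n:ℝ) - (k:ℝ)*ε - ((i:ℝ)-1)*(1+ε))/(1+ε) := by
      field_simp
      ring
    have hd := div_nonneg hnum1 h1e.le
    nlinarith [heq, hd]
  · have hnum2 := num_upper (a:ℝ) (k:ℝ) (i:ℝ) (n:ℝ) ε hA hK1 hKA hI1 hε0 hg hεu hn2'
    have heq : (((a:ℝ)+1)*(n:ℝ) + ((k:ℝ)-1) + (i:ℝ) + 1) - (((a:ℝ)+1+ε)*(n:ℝ) - (k:ℝ)*(-1/(1+ε)))
        = -(ε*(1+ε)*(n:ℝ) - (k:ℝ)*ε - (i:ℝ)*(1+ε))/(1+ε) := by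
      field_simp
      ring
    have hd := div_pos (neg_pos.2 hnum2) h1e
    nlinarith [heq, hd]
end

section
/- For integers a ≥ 34, 1 ≤ k ≤ a, and any integer n with (k-1) + (a+1)⌈k/2⌉ + (a+1)(⌊k/2⌋-1) + 2 ≤ n ≤ k(a+1) + [2k > a], the floor of ℓ₂₃(n) = (ρ₂+ρ₃)n - kρ₂ρ₃ equals (a+1)n + 2k - 1, where [2k > a] is 1 if 2k > a and 0 otherwise. -/
private lemma aux_cancel_le (c x y : ℝ) (hc : 0 < c) (h : 0 ≤ c * (x - y)) : y ≤ x := by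
  nlinarith

private lemma aux_cancel_lt (c x y : ℝ) (hc : 0 < c) (h : 0 < c * (x - y)) : y < x := by
  nlinarith

private lemma aux_lower (A K N t : ℝ) (hA : 34 ≤ A) (hK1 : 1 ≤ K) (hK2 : K ≤ A)
    (hN1 : (A+2)*(K-1)+2 ≤ N) (ht0 : 0 < t) (htA1 : (A+1)*t < 1)
    (F5 : A*t + (A+3)*t^2 + t^3 = 1) :
    (K-1) + (2*K-1)*t ≤ t*N*(1+t) := by
  have h1t : (0:ℝ) < 1 + t := by linarith
  have step1 : t*((A+2)*(K-1)+2)*(1+t) ≤ t*N*(1+t) := by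
    have htt : 0 < t*(1+t) := mul_pos ht0 h1t
    nlinarith [htt, hN1]
  have hiden : t*((A+2)*(K-1)+2)*(1+t) - ((K-1) + (2*K-1)*t)
      = t*((K-1)*(1 - (A+1)*t - (A+4)*t^2 - t^3) + 1 + 2*t) := by
    linear_combination (K*t - t + K - 1) * F5
  have hP0 : (0:ℝ) ≤ 1 - (A+1)*t := by linarith
  have hWpos : 0 ≤ (K-1)*(1 - (A+1)*t - (A+4)*t^2 - t^3) + 1 + 2*t := by
    rcases le_or_gt 0 (1 - (A+1)*t - (A+4)*t^2 - t^3) with hW | hW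
    · have := mul_nonneg (by linarith : (0:ℝ) ≤ K-1) hW
      linarith
    · have f0 : 0 ≤ (A-K) * (-(1 - (A+1)*t - (A+4)*t^2 - t^3)) :=
        mul_nonneg (by linarith) (by linarith)
      have f1 : 0 ≤ (1 - (A+1)*t) * ((A+2)*t) :=
        mul_nonneg hP0 (by nlinarith)
      have f2 : 0 ≤ (1 - (A+1)*t) * t^2 :=
        mul_nonneg hP0 (by positivity)
      have f3 : 0 < t^2 := by positivity
      have f4 : 0 < t^3 := by positivity
      nlinarith [f0, f1, f2, f3, f4]
  have := mul_nonneg ht0.le hWpos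
  linarith

private lemma aux_upper (A K N t : ℝ) (hA : 34 ≤ A) (hK1 : 1 ≤ K)
    (hN2 : N ≤ K*(A+1)+1) (ht0 : 0 < t) (htA2 : 1 < (A+2)*t)
    (F5 : A*t + (A+3)*t^2 + t^3 = 1) :
    t*N*(1+t) < K*(1+2*t) := by
  have h1t : (0:ℝ) < 1 + t := by linarith
  have step1 : t*N*(1+t) ≤ t*(K*(A+1)+1)*(1+t) := by
    have htt : 0 < t*(1+t) := mul_pos ht0 h1t
    nlinarith [htt, hN2]
  have hiden2 : t*(K*(A+1)+1)*(1+t) - K*(1+2*t)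
      = t + t^2 - K*((A+2)*t^2 + (A+4)*t^3 + t^4) := by
    linear_combination (K*t + K) * F5
  have hneg : t + t^2 - K*((A+2)*t^2 + (A+4)*t^3 + t^4) < 0 := by
    have g1 : 0 < t * ((A+2)*t - 1) := mul_pos ht0 (by linarith)
    have g2 : 0 < t^2 * ((A+2)*t - 1) := mul_pos (by positivity) (by linarith)
    have g3 : 0 < t^4 := by positivity
    have g4 : 0 ≤ (K-1) * ((A+2)*t^2 + (A+4)*t^3 + t^4) := by
      apply mul_nonneg (by linarith)
      nlinarith [g1, g2, g3]
    nlinarith [g1, g2, g3, g4]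
  linarith

theorem simplest_cubic_right_line_floor_last (a k n : ℤ) (ha : 34 ≤ a)
    (hk1 : 1 ≤ k) (hka : k ≤ a) (ρ₁ ρ₂ ρ₃ : ℝ)
    (h12 : ρ₁ < ρ₂) (h23 : ρ₂ < ρ₃)
    (h1 : ρ₁^3 - a*ρ₁^2 - (a+3)*ρ₁ - 1 = 0)
    (h2 : ρ₂^3 - a*ρ₂^2 - (a+3)*ρ₂ - 1 = 0)
    (h3 : ρ₃^3 - a*ρ₃^2 - (a+3)*ρ₃ - 1 = 0)
    (hn1 : (k-1) + (a+1)*((k+1)/2) + (a+1)*(k/2 - 1) + 2 ≤ n)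
    (hn2 : n ≤ k*(a+1) + (if 2*k > a then 1 else 0)) :
    ⌊(ρ₂+ρ₃)*(n:ℝ) - k*(ρ₂*ρ₃)⌋ = (a+1)*n + 2*k - 1 := by
  have hA : (34:ℝ) ≤ (a:ℝ) := by exact_mod_cast ha
  -- Vieta
  have e12 : ρ₁^2 + ρ₁*ρ₂ + ρ₂^2 - (a:ℝ)*(ρ₁+ρ₂) - ((a:ℝ)+3) = 0 := by
    have h : (ρ₁ - ρ₂) * (ρ₁^2 + ρ₁*ρ₂ + ρ₂^2 - (a:ℝ)*(ρ₁+ρ₂) - ((a:ℝ)+3)) = 0 := by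
      linear_combination h1 - h2
    rcases mul_eq_zero.mp h with h' | h'
    · exact absurd (sub_eq_zero.mp h') (ne_of_lt h12)
    · exact h'
  have e13 : ρ₁^2 + ρ₁*ρ₃ + ρ₃^2 - (a:ℝ)*(ρ₁+ρ₃) - ((a:ℝ)+3) = 0 := by
    have h : (ρ₁ - ρ₃) * (ρ₁^2 + ρ₁*ρ₃ + ρ₃^2 - (a:ℝ)*(ρ₁+ρ₃) - ((a:ℝ)+3)) = 0 := by
      linear_combination h1 - h3
    rcases mul_eq_zero.mp h with h' | h'
    · exact absurd (sub_eq_zero.mp h') (ne_of_lt (lt_trans h12 h23))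
    · exact h'
  have hs : ρ₂ + ρ₃ = (a:ℝ) - ρ₁ := by
    have h : (ρ₂ - ρ₃) * (ρ₁ + ρ₂ + ρ₃ - (a:ℝ)) = 0 := by
      linear_combination e12 - e13
    rcases mul_eq_zero.mp h with h' | h'
    · exact absurd (sub_eq_zero.mp h') (ne_of_lt h23)
    · linarith
  have he2 : ρ₁*ρ₂ + ρ₁*ρ₃ + ρ₂*ρ₃ = -((a:ℝ)+3) := by
    linear_combination (-1 : ℝ) * e12 + (ρ₁+ρ₂) * hs
  have he3 : ρ₁*(ρ₂*ρ₃) = 1 := by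
    linear_combination h1 - ρ₁^2 * hs + ρ₁ * he2
  have hfac : ∀ x : ℝ, x^3 - (a:ℝ)*x^2 - ((a:ℝ)+3)*x - 1 = (x-ρ₁)*(x-ρ₂)*(x-ρ₃) := by
    intro x
    linear_combination x^2 * hs - x * he2 + he3
  -- bounds on the roots
  have hρ₃ : (a:ℝ) + 1 < ρ₃ := by
    by_contra hc
    push_neg at hc
    have H := hfac ((a:ℝ)+1)
    have hval : ((a:ℝ)+1)^3 - (a:ℝ)*((a:ℝ)+1)^2 - ((a:ℝ)+3)*((a:ℝ)+1) - 1 = -2*(a:ℝ)-3 := by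
      ring
    have key : 0 ≤ ((a:ℝ)+1-ρ₁) * ((a:ℝ)+1-ρ₂) * ((a:ℝ)+1-ρ₃) :=
      mul_nonneg (mul_nonneg (by linarith) (by linarith)) (by linarith)
    linarith [H, hval, key]
  set c2 : ℝ := ((a:ℝ)+2)⁻¹ with hc2def
  have hc2pos : 0 < c2 := by rw [hc2def]; positivity
  have hc2 : ((a:ℝ)+2) * c2 = 1 := by
    rw [hc2def]; field_simp
  have hc2small : c2 ≤ 1/36 := by
    nlinarith [hc2, mul_nonneg (by linarith : (0:ℝ) ≤ (a:ℝ)-34) hc2pos.le]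
  set c1 : ℝ := ((a:ℝ)+1)⁻¹ with hc1def
  have hc1pos : 0 < c1 := by rw [hc1def]; positivity
  have hc1 : ((a:ℝ)+1) * c1 = 1 := by
    rw [hc1def]; field_simp
  have hρ₁u : ρ₁ < -1 - c2 := by
    by_contra hc
    push_neg at hc
    have H := hfac (-1-c2)
    have hval : (-1-c2)^3 - (a:ℝ)*(-1-c2)^2 - ((a:ℝ)+3)*(-1-c2) - 1 = c2 - c2^2 - c2^3 := by
      linear_combination (-(1+c2)) * hc2
    have key : 0 ≤ (ρ₁-(-1-c2)) * ((ρ₂-(-1-c2)) * (ρ₃-(-1-c2))) := by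
      apply mul_nonneg (by linarith)
      apply mul_nonneg (by linarith) (by linarith)
    have keyr : (ρ₁-(-1-c2)) * ((ρ₂-(-1-c2)) * (ρ₃-(-1-c2)))
        = -(((-1-c2)-ρ₁) * ((-1-c2)-ρ₂) * ((-1-c2)-ρ₃)) := by ring
    have hvpos : 0 < c2 - c2^2 - c2^3 := by
      nlinarith [mul_nonneg (by linarith : (0:ℝ) ≤ 1/36 - c2) hc2pos.le,
        mul_nonneg (mul_nonneg (by linarith : (0:ℝ) ≤ 1/36 - c2) hc2pos.le) hc2pos.le,
        mul_pos hc2pos hc2pos]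
    linarith [H, hval, key, keyr]
  have hρ₂ : -1 < ρ₂ := by
    by_contra hc
    push_neg at hc
    have H := hfac (-1)
    have hval : (-1:ℝ)^3 - (a:ℝ)*(-1:ℝ)^2 - ((a:ℝ)+3)*(-1:ℝ) - 1 = 1 := by ring
    have key : 0 ≤ ((-1:ℝ)-ρ₁) * ((-1:ℝ)-ρ₂) * (ρ₃-(-1:ℝ)) :=
      mul_nonneg (mul_nonneg (by linarith) (by linarith)) (by linarith)
    have keyr : ((-1:ℝ)-ρ₁) * ((-1:ℝ)-ρ₂) * (ρ₃-(-1:ℝ))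
        = -(((-1:ℝ)-ρ₁) * ((-1:ℝ)-ρ₂) * ((-1:ℝ)-ρ₃)) := by ring
    linarith [H, hval, key, keyr]
  have hρ₁l : -1 - c1 < ρ₁ := by
    by_contra hc
    push_neg at hc
    have H := hfac (-1-c1)
    have hval : (-1-c1)^3 - (a:ℝ)*(-1-c1)^2 - ((a:ℝ)+3)*(-1-c1) - 1 = -2*c1^2 - c1^3 := by
      linear_combination (-(1+c1)) * hc1
    have key : 0 ≤ ((-1-c1)-ρ₁) * ((ρ₂-(-1-c1)) * (ρ₃-(-1-c1))) := by
      apply mul_nonneg (by linarith)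
      apply mul_nonneg (by linarith) (by linarith)
    have keyr : ((-1-c1)-ρ₁) * ((ρ₂-(-1-c1)) * (ρ₃-(-1-c1)))
        = ((-1-c1)-ρ₁) * ((-1-c1)-ρ₂) * ((-1-c1)-ρ₃) := by ring
    have hvneg : 0 < 2*c1^2 + c1^3 := by positivity
    linarith [H, hval, key, keyr]
  -- introduce t = -1 - ρ₁
  set t : ℝ := -ρ₁ - 1 with htdef
  have hrt : ρ₁ = -1 - t := by rw [htdef]; ring
  have htc2 : c2 < t := by rw [htdef]; linarith
  have htc1 : t < c1 := by rw [htdef]; linarith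
  have ht0 : 0 < t := lt_trans hc2pos htc2
  have h1t : (0:ℝ) < 1 + t := by linarith
  have F5 : (a:ℝ)*t + ((a:ℝ)+3)*t^2 + t^3 = 1 := by
    rw [hrt] at h1
    linear_combination -h1
  have hq : (1+t) * (ρ₂*ρ₃) = -1 := by
    rw [hrt] at he3
    linear_combination -he3
  have hsum : ρ₂ + ρ₃ = (a:ℝ) + 1 + t := by
    rw [hrt] at hs
    linarith
  have htA2 : 1 < ((a:ℝ)+2) * t := by
    calc (1:ℝ) = ((a:ℝ)+2) * c2 := hc2.symm
    _ < ((a:ℝ)+2) * t := by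
        apply mul_lt_mul_of_pos_left htc2; linarith
  have htA1 : ((a:ℝ)+1) * t < 1 := by
    calc ((a:ℝ)+1) * t < ((a:ℝ)+1) * c1 := by
          apply mul_lt_mul_of_pos_left htc1; linarith
    _ = 1 := hc1
  -- integer range manipulation
  have hdiv : (k+1)/2 + k/2 = k := by omega
  have hmm : (a+1)*((k+1)/2) + (a+1)*(k/2 - 1) = (a+1)*(k-1) := by
    linear_combination (a+1) * hdiv
  have hrr : (a+2)*(k-1) = (k-1) + (a+1)*(k-1) := by ring
  have hn1' : (a+2)*(k-1) + 2 ≤ n := by linarith [hn1, hmm, hrr]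
  have hn2' : n ≤ k*(a+1) + 1 := by
    split_ifs at hn2 with h
    · exact hn2
    · linarith
  have hN1 : ((a:ℝ)+2)*((k:ℝ)-1) + 2 ≤ (n:ℝ) := by exact_mod_cast hn1'
  have hN2 : (n:ℝ) ≤ (k:ℝ)*((a:ℝ)+1) + 1 := by exact_mod_cast hn2'
  have hK1 : (1:ℝ) ≤ (k:ℝ) := by exact_mod_cast hk1
  have hK2 : (k:ℝ) ≤ (a:ℝ) := by exact_mod_cast hka
  have lower' := aux_lower (a:ℝ) (k:ℝ) (n:ℝ) t hA hK1 hK2 hN1 ht0 htA1 F5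
  have upper' := aux_upper (a:ℝ) (k:ℝ) (n:ℝ) t hA hK1 hN2 ht0 htA2 F5
  -- conclude
  rw [Int.floor_eq_iff]
  constructor
  · push_cast
    have hkey : (1+t) * (((ρ₂+ρ₃)*(n:ℝ) - (k:ℝ)*(ρ₂*ρ₃)) - (((a:ℝ)+1)*(n:ℝ) + 2*(k:ℝ) - 1))
        = t*(n:ℝ)*(1+t) - (((k:ℝ)-1) + (2*(k:ℝ)-1)*t) := by
      linear_combination ((1+t)*(n:ℝ)) * hsum - (k:ℝ) * hq
    exact aux_cancel_le (1+t) _ _ h1t (by linarith [hkey, lower'])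
  · push_cast
    have hkey : (1+t) * (((((a:ℝ)+1)*(n:ℝ) + 2*(k:ℝ) - 1) + 1) - ((ρ₂+ρ₃)*(n:ℝ) - (k:ℝ)*(ρ₂*ρ₃)))
        = (k:ℝ)*(1+2*t) - t*(n:ℝ)*(1+t) := by
      linear_combination (-(1+t)*(n:ℝ)) * hsum + (k:ℝ) * hq
    exact aux_cancel_lt (1+t) _ _ h1t (by linarith [hkey, upper'])
end

section
/- For every integer a ≥ 1, the area of the triangle T_a with vertices (ρ_i, ρ_i²), i = 1,2,3, where ρ_i are the roots of f_a, equals (a² + 3a + 9)/2. -/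
open MeasureTheory Set

lemma stdTriSet_eq : convexHull ℝ {((0:ℝ),(0:ℝ)), (1,0), (0,1)} =
    {p : ℝ × ℝ | 0 ≤ p.1 ∧ 0 ≤ p.2 ∧ p.1 + p.2 ≤ 1} := by
  apply Subset.antisymm
  · apply convexHull_min
    · rintro p (rfl | rfl | rfl) <;> norm_num
    · rintro ⟨x1, x2⟩ ⟨hx1, hx2, hx3⟩ ⟨y1, y2⟩ ⟨hy1, hy2, hy3⟩ a b ha hb hab
      refine ⟨?_, ?_, ?_⟩ <;> simp [Prod.smul_def, smul_eq_mul] <;> nlinarith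
  · rintro ⟨x, y⟩ ⟨hx, hy, hxy⟩
    simp only at hx hy hxy
    rcases eq_or_lt_of_le (add_nonneg hx hy) with h0 | h0
    · have hx0 : x = 0 := by linarith
      have hy0 : y = 0 := by linarith
      subst hx0; subst hy0
      exact subset_convexHull ℝ _ (by simp)
    · have hne : x + y ≠ 0 := ne_of_gt h0
      have hm : ((x/(x+y), y/(x+y)) : ℝ × ℝ) ∈ segment ℝ ((1:ℝ),(0:ℝ)) ((0:ℝ),(1:ℝ)) := by
        refine ⟨x/(x+y), y/(x+y), by positivity, by positivity, by field_simp, ?_⟩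
        simp [Prod.smul_def, smul_eq_mul]
      have hmem : ((x/(x+y), y/(x+y)) : ℝ × ℝ) ∈ convexHull ℝ {((0:ℝ),(0:ℝ)), (1,0), (0,1)} :=
        segment_subset_convexHull (by simp) (by simp) hm
      have hA : ((0:ℝ),(0:ℝ)) ∈ convexHull ℝ ({((0:ℝ),(0:ℝ)), (1,0), (0,1)} : Set (ℝ×ℝ)) :=
        subset_convexHull ℝ _ (by simp)
      have key : ((x, y) : ℝ × ℝ) = (x+y) • ((x/(x+y), y/(x+y)) : ℝ×ℝ)
          + (1-(x+y)) • ((0:ℝ),(0:ℝ)) := by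
        ext <;> simp [Prod.smul_def, smul_eq_mul] <;> field_simp
      rw [key]
      exact (convex_convexHull ℝ _) hmem hA (le_of_lt h0) (by linarith) (by ring)

lemma stdTri_vol : volume {p : ℝ × ℝ | 0 ≤ p.1 ∧ 0 ≤ p.2 ∧ p.1 + p.2 ≤ 1}
    = ENNReal.ofReal (1/2) := by
  have hS : MeasurableSet {p : ℝ × ℝ | 0 ≤ p.1 ∧ 0 ≤ p.2 ∧ p.1 + p.2 ≤ 1} := by
    apply MeasurableSet.inter (measurableSet_le measurable_const measurable_fst)
    exact MeasurableSet.inter (measurableSet_le measurable_const measurable_snd)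
      (measurableSet_le (measurable_fst.add measurable_snd) measurable_const)
  rw [MeasureTheory.Measure.volume_eq_prod, Measure.prod_apply hS]
  have hslice : ∀ x : ℝ, (volume (Prod.mk x ⁻¹' {p : ℝ × ℝ | 0 ≤ p.1 ∧ 0 ≤ p.2 ∧ p.1 + p.2 ≤ 1}))
      = Set.indicator (Set.Icc (0:ℝ) 1) (fun t => ENNReal.ofReal (1-t)) x := by
    intro x
    by_cases hx : x ∈ Set.Icc (0:ℝ) 1
    · rw [Set.indicator_of_mem hx]
      have : Prod.mk x ⁻¹' {p : ℝ × ℝ | 0 ≤ p.1 ∧ 0 ≤ p.2 ∧ p.1 + p.2 ≤ 1} = Icc 0 (1-x) := by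
        ext y
        simp only [mem_preimage, mem_setOf_eq, mem_Icc]
        constructor
        · rintro ⟨-, h2, h3⟩; exact ⟨h2, by linarith⟩
        · rintro ⟨h2, h3⟩; exact ⟨hx.1, h2, by linarith⟩
      rw [this, Real.volume_Icc]
      norm_num
    · rw [Set.indicator_of_notMem hx]
      have : Prod.mk x ⁻¹' {p : ℝ × ℝ | 0 ≤ p.1 ∧ 0 ≤ p.2 ∧ p.1 + p.2 ≤ 1} = (∅ : Set ℝ) := by
        ext y
        simp only [mem_preimage, mem_setOf_eq, mem_empty_iff_false, iff_false]
        rintro ⟨h1, h2, h3⟩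
        simp only [mem_Icc, not_and_or, not_le] at hx
        rcases hx with h | h <;> linarith
      rw [this, measure_empty]
  simp only [hslice]
  rw [lintegral_indicator measurableSet_Icc]
  rw [← ofReal_integral_eq_lintegral_ofReal]
  · rw [integral_Icc_eq_integral_Ioc, ← intervalIntegral.integral_of_le (by norm_num : (0:ℝ) ≤ 1)]
    norm_num [intervalIntegral.integral_sub intervalIntegrable_const intervalIntegral.intervalIntegrable_id,
      integral_id]
  · exact (Continuous.integrableOn_Icc (by continuity))
  · filter_upwards [ae_restrict_mem measurableSet_Icc] with t ht
    simp only [mem_Icc] at ht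
    simp only [Pi.zero_apply]
    linarith [ht.2]

lemma triangle_vol (p q r : ℝ × ℝ) :
    volume (convexHull ℝ {p, q, r}) =
      ENNReal.ofReal (|(q.1-p.1)*(r.2-p.2)-(r.1-p.1)*(q.2-p.2)| / 2) := by
  set L : (ℝ × ℝ) →ₗ[ℝ] (ℝ × ℝ) :=
    Matrix.toLin (Module.Basis.finTwoProd ℝ) (Module.Basis.finTwoProd ℝ)
      !![q.1-p.1, r.1-p.1; q.2-p.2, r.2-p.2] with hL
  have hdet : LinearMap.det L = (q.1-p.1)*(r.2-p.2)-(r.1-p.1)*(q.2-p.2) := by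
    rw [hL, LinearMap.det_toLin, Matrix.det_fin_two_of]
  set f : (ℝ × ℝ) →ᵃ[ℝ] (ℝ × ℝ) :=
    AffineMap.mk' (fun x => p + L x) L 0 (fun x => by simp [add_comm]) with hfdef
  have hf : ⇑f = fun x => p + L x := AffineMap.coe_mk' _ _ _ _
  have hfA : f ((0:ℝ),(0:ℝ)) = p := by
    rw [hf]; simp [hL, Matrix.toLin_finTwoProd_apply, Prod.ext_iff]
  have hfB : f ((1:ℝ),(0:ℝ)) = q := by
    rw [hf]; simp [hL, Matrix.toLin_finTwoProd_apply, Prod.ext_iff]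
  have hfC : f ((0:ℝ),(1:ℝ)) = r := by
    rw [hf]; simp [hL, Matrix.toLin_finTwoProd_apply, Prod.ext_iff]
  have himg : ⇑f '' (convexHull ℝ {((0:ℝ),(0:ℝ)), (1,0), (0,1)})
      = convexHull ℝ {p, q, r} := by
    rw [AffineMap.image_convexHull]
    congr 1
    rw [Set.image_insert_eq, Set.image_insert_eq, Set.image_singleton, hfA, hfB, hfC]
  rw [← himg, hf]
  have : (fun x => p + L x) '' (convexHull ℝ {((0:ℝ),(0:ℝ)), (1,0), (0,1)})
      = (fun x => p + x) '' (L '' (convexHull ℝ {((0:ℝ),(0:ℝ)), (1,0), (0,1)})) := by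
    rw [Set.image_image]
  rw [this, image_add_left, measure_preimage_add]
  rw [Measure.addHaar_image_linearMap, hdet, stdTriSet_eq, stdTri_vol,
    ← ENNReal.ofReal_mul (abs_nonneg _)]
  ring_nf

theorem simplest_cubic_triangle_area (a : ℤ) (ha : 1 ≤ a) (ρ₁ ρ₂ ρ₃ : ℝ)
    (h12 : ρ₁ < ρ₂) (h23 : ρ₂ < ρ₃)
    (h1 : ρ₁^3 - a*ρ₁^2 - (a+3)*ρ₁ - 1 = 0)
    (h2 : ρ₂^3 - a*ρ₂^2 - (a+3)*ρ₂ - 1 = 0)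
    (h3 : ρ₃^3 - a*ρ₃^2 - (a+3)*ρ₃ - 1 = 0)
    (T : Set (ℝ × ℝ))
    (hT : T = convexHull ℝ {(ρ₁, ρ₁^2), (ρ₂, ρ₂^2), (ρ₃, ρ₃^2)}) :
    MeasureTheory.volume T = ENNReal.ofReal (((a:ℝ)^2 + 3*a + 9) / 2) := by
  have h13 : ρ₁ < ρ₃ := h12.trans h23
  have n12 : ρ₁ - ρ₂ ≠ 0 := sub_ne_zero.mpr h12.ne
  have n13 : ρ₁ - ρ₃ ≠ 0 := sub_ne_zero.mpr h13.ne
  have n23 : ρ₂ - ρ₃ ≠ 0 := sub_ne_zero.mpr h23.ne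
  set A : ℝ := (a : ℝ) with hA
  -- pairwise relations
  have hAB : ρ₁^2 + ρ₁*ρ₂ + ρ₂^2 - (A*(ρ₁+ρ₂) + (A+3)) = 0 := by
    apply mul_left_cancel₀ n12
    linear_combination h1 - h2
  have hAC : ρ₁^2 + ρ₁*ρ₃ + ρ₃^2 - (A*(ρ₁+ρ₃) + (A+3)) = 0 := by
    apply mul_left_cancel₀ n13
    linear_combination h1 - h3
  have hBC : ρ₂^2 + ρ₂*ρ₃ + ρ₃^2 - (A*(ρ₂+ρ₃) + (A+3)) = 0 := by
    apply mul_left_cancel₀ n23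
    linear_combination h2 - h3
  have he1 : ρ₁ + ρ₂ + ρ₃ = A := by
    apply mul_left_cancel₀ n12
    linear_combination hAC - hBC
  have he2 : ρ₁*ρ₂ + ρ₁*ρ₃ + ρ₂*ρ₃ = -(A + 3) := by
    linear_combination (ρ₁ + ρ₂) * he1 - hAB
  have he3 : ρ₁ * ρ₂ * ρ₃ = 1 := by
    linear_combination h1 - ρ₁^2 * he1 + ρ₁ * he2
  set P : ℝ := (ρ₂-ρ₁)*(ρ₃-ρ₁)*(ρ₃-ρ₂) with hP
  have hPpos : 0 < P := by
    apply mul_pos (mul_pos (by linarith) (by linarith)) (by linarith)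
  have hs : (0:ℝ) < A^2 + 3*A + 9 := by nlinarith [sq_nonneg (A + 3/2)]
  have hsq : P^2 = (A^2 + 3*A + 9)^2 := by
    have key : P^2 = (ρ₁+ρ₂+ρ₃)^2 * (ρ₁*ρ₂+ρ₁*ρ₃+ρ₂*ρ₃)^2
        - 4*(ρ₁*ρ₂+ρ₁*ρ₃+ρ₂*ρ₃)^3 - 4*(ρ₁+ρ₂+ρ₃)^3*(ρ₁*ρ₂*ρ₃)
        + 18*(ρ₁+ρ₂+ρ₃)*(ρ₁*ρ₂+ρ₁*ρ₃+ρ₂*ρ₃)*(ρ₁*ρ₂*ρ₃)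
        - 27*(ρ₁*ρ₂*ρ₃)^2 := by ring
    rw [key, he1, he2, he3]; ring
  have hPval : P = A^2 + 3*A + 9 := by
    apply mul_left_cancel₀ (ne_of_gt (by linarith : (0:ℝ) < P + (A^2 + 3*A + 9)))
    linear_combination hsq
  rw [hT, triangle_vol]
  congr 1
  have hdet : ((ρ₂, ρ₂^2).1 - (ρ₁, ρ₁^2).1) * ((ρ₃, ρ₃^2).2 - (ρ₁, ρ₁^2).2)
      - ((ρ₃, ρ₃^2).1 - (ρ₁, ρ₁^2).1) * ((ρ₂, ρ₂^2).2 - (ρ₁, ρ₁^2).2) = P := by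
    simp only; ring
  rw [hdet, abs_of_pos hPpos, hPval]
end

section
/- For integers a ≥ 34 and 1 ≤ k ≤ a, and for any integer n with -k ≤ n ≤ -1, the number of lattice points (x, y) ∈ ℤ² in kT_a with x = n equals ⌊ℓ₁₃(n)⌋ - ⌊ℓ₁₂(n)⌋, where ℓ_{ij}(x) = (ρ_i+ρ_j)x - kρ_iρ_j. -/
lemma no_rat_root (a : ℤ) (q : ℚ) : q^3 - a*q^2 - (a+3)*q - 1 ≠ 0 := by
  intro h
  set z : ℤ := q.num with hz
  set d : ℤ := (q.den : ℤ) with hd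
  have hdpos : 0 < d := by rw [hd]; exact_mod_cast q.pos
  have hd0 : (d:ℚ) ≠ 0 := by
    simp [hd]
  have hq : q = (z:ℚ)/(d:ℚ) := by
    rw [hz, hd]; exact_mod_cast (Rat.num_div_den q).symm
  have hZ : z^3 - a*z^2*d - (a+3)*z*d^2 - d^3 = 0 := by
    have h3 : (d:ℚ)^3 * ((z:ℚ)^3 - a*z^2*d - (a+3)*z*d^2 - d^3) = 0 := by
      rw [hq] at h
      field_simp at h
      linear_combination (d:ℚ)^3 * h
    rcases mul_eq_zero.mp h3 with h' | h'
    · exact absurd h' (pow_ne_zero 3 hd0)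
    · exact_mod_cast h'
  have hcop : IsCoprime z d := by
    rw [Int.isCoprime_iff_gcd_eq_one]
    exact_mod_cast q.reduced
  have hdvd : d ∣ z^3 := ⟨a*z^2 + (a+3)*z*d + d^2, by linarith [hZ]⟩
  have hunit : IsUnit d := (hcop.symm.pow_right (n := 3)).isUnit_of_dvd hdvd
  have hd1 : d = 1 := by
    rcases Int.isUnit_iff.mp hunit with h' | h'
    · exact h'
    · omega
  rw [hd1] at hZ
  have hz1 : z ∣ 1 := ⟨z^2 - a*z - (a+3), by linear_combination -hZ⟩
  rcases Int.isUnit_iff.mp (isUnit_of_dvd_one hz1) with h' | h' <;>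
    rw [h'] at hZ <;> norm_num at hZ <;> omega



lemma no_int_quad' (a : ℤ) (ρ : ℝ) (hρ : ρ^3 - a*ρ^2 - (a+3)*ρ - 1 = 0)
    (c b e : ℤ) (hc : c ≠ 0) (h : (c:ℝ)*ρ^2 + b*ρ + e = 0) : False := by
  set A : ℤ := b^2 - e*c + a*b*c - (a+3)*c^2 with hA
  set C : ℤ := c^2 - a*c*e - b*e with hC
  have key : (A:ℝ) * ρ = C := by
    push_cast [hA, hC]
    linear_combination ((c:ℝ)^2) * hρ - ((c:ℝ)*ρ - b - a*c) * h
  by_cases hA0 : A = 0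
  · have hC0 : C = 0 := by
      have : (C:ℝ) = 0 := by rw [← key, hA0]; push_cast; ring
      exact_mod_cast this
    have hc0 : ((c:ℤ):ℚ) ≠ 0 := Int.cast_ne_zero.mpr hc
    have hAq : ((b^2 - e*c + a*b*c - (a+3)*c^2 : ℤ) : ℚ) = 0 := by rw [← hA]; exact_mod_cast hA0
    have hCq : ((c^2 - a*c*e - b*e : ℤ) : ℚ) = 0 := by rw [← hC]; exact_mod_cast hC0
    push_cast at hAq hCq
    set q : ℚ := ((a*c+b : ℤ):ℚ)/((c:ℤ):ℚ) with hqdef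
    apply no_rat_root a q
    have hu : ((a*c+b:ℤ):ℚ)^3 - a*((a*c+b:ℤ):ℚ)^2*((c:ℤ):ℚ)
        - (a+3)*((a*c+b:ℤ):ℚ)*((c:ℤ):ℚ)^2 - ((c:ℤ):ℚ)^3 = 0 := by
      push_cast
      linear_combination ((a:ℚ)*c+b) * hAq - (c:ℚ) * hCq
    have hsplit : q^3 - (a:ℚ)*q^2 - ((a:ℚ)+3)*q - 1 =
        (((a*c+b:ℤ):ℚ)^3 - a*((a*c+b:ℤ):ℚ)^2*((c:ℤ):ℚ)
        - (a+3)*((a*c+b:ℤ):ℚ)*((c:ℤ):ℚ)^2 - ((c:ℤ):ℚ)^3)/((c:ℤ):ℚ)^3 := by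
      rw [hqdef]; field_simp
    rw [hsplit, hu, zero_div]
  · have hA0' : ((A:ℤ):ℝ) ≠ 0 := Int.cast_ne_zero.mpr hA0
    have hρq : ρ = (C:ℝ)/(A:ℝ) := by
      field_simp
      linear_combination key
    set q : ℚ := ((C:ℤ):ℚ)/((A:ℤ):ℚ) with hqdef
    apply no_rat_root a q
    have hcast : ((q:ℚ):ℝ) = ρ := by rw [hqdef, hρq]; push_cast; ring
    have : ((q^3 - a*q^2 - (a+3)*q - 1 : ℚ) : ℝ) = 0 := by push_cast [hcast]; linarith [hρ]
    exact_mod_cast this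


lemma slice_mem' (r1 r2 r3 K x y : ℝ) (h12 : r1 < r2) (h23 : r2 < r3) (hK : 0 < K)
    (hx1 : K*r1 ≤ x) (hx2 : x ≤ K*r2) :
    ((x, y) ∈ convexHull ℝ {(K*r1, K*r1^2), (K*r2, K*r2^2), (K*r3, K*r3^2)} : Prop) ↔
      (r1+r2)*x - K*(r1*r2) ≤ y ∧ y ≤ (r1+r3)*x - K*(r1*r3) := by
  have e21 : (0:ℝ) < r2 - r1 := by linarith
  have e32 : (0:ℝ) < r3 - r2 := by linarith
  have e31 : (0:ℝ) < r3 - r1 := by linarith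
  constructor
  · intro hmem
    have hsub : convexHull ℝ {(K*r1, K*r1^2), (K*r2, K*r2^2), (K*r3, K*r3^2)} ⊆
        {p : ℝ × ℝ | (r1+r2)*p.1 - p.2 ≤ K*(r1*r2) ∧ -((r1+r3)*p.1) + p.2 ≤ -(K*(r1*r3))} := by
      apply convexHull_min
      · rintro p (rfl | rfl | rfl) <;> refine ⟨?_, ?_⟩ <;> simp only [Set.mem_setOf_eq]
        · nlinarith
        · nlinarith
        · nlinarith [mul_pos hK (mul_pos e21 e32)]
        · nlinarith
        · nlinarith [mul_pos hK (mul_pos e31 e32)]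
        · nlinarith
      · rw [Set.setOf_and]
        exact Convex.inter
          (convex_halfSpace_le ⟨fun p q => by simp; ring, fun c p => by simp; ring⟩ _)
          (convex_halfSpace_le ⟨fun p q => by simp; ring, fun c p => by simp; ring⟩ _)
    obtain ⟨hA, hB⟩ := hsub hmem
    simp only [Set.mem_setOf_eq] at hA hB
    constructor <;> [linarith; linarith]
  · rintro ⟨hy1, hy2⟩
    have hd12 : 0 < K*r2 - K*r1 := by nlinarith
    have hd13 : 0 < K*r3 - K*r1 := by nlinarith
    set t : ℝ := (x - K*r1)/(K*r2 - K*r1) with ht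
    set s : ℝ := (x - K*r1)/(K*r3 - K*r1) with hs
    have ht0 : 0 ≤ t := div_nonneg (by linarith) hd12.le
    have ht1 : t ≤ 1 := (div_le_one hd12).mpr (by linarith)
    have hs0 : 0 ≤ s := div_nonneg (by linarith) hd13.le
    have hs1 : s ≤ 1 := (div_le_one hd13).mpr (by nlinarith)
    have hV1 : (K*r1, K*r1^2) ∈ convexHull ℝ {(K*r1, K*r1^2), (K*r2, K*r2^2), (K*r3, K*r3^2)} :=
      subset_convexHull ℝ _ (by simp)
    have hV2 : (K*r2, K*r2^2) ∈ convexHull ℝ {(K*r1, K*r1^2), (K*r2, K*r2^2), (K*r3, K*r3^2)} :=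
      subset_convexHull ℝ _ (by simp)
    have hV3 : (K*r3, K*r3^2) ∈ convexHull ℝ {(K*r1, K*r1^2), (K*r2, K*r2^2), (K*r3, K*r3^2)} :=
      subset_convexHull ℝ _ (by simp)
    have hconv := convex_convexHull ℝ ({(K*r1, K*r1^2), (K*r2, K*r2^2), (K*r3, K*r3^2)} : Set (ℝ×ℝ))
    have hbot : ((x, (r1+r2)*x - K*(r1*r2)) : ℝ×ℝ) ∈
        convexHull ℝ {(K*r1, K*r1^2), (K*r2, K*r2^2), (K*r3, K*r3^2)} := by
      have hmem' := hconv hV1 hV2 (by linarith : (0:ℝ) ≤ 1 - t) ht0 (by ring)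
      have hcombo : (1-t) • ((K*r1, K*r1^2):ℝ×ℝ) + t • ((K*r2, K*r2^2):ℝ×ℝ)
          = ((x, (r1+r2)*x - K*(r1*r2)) : ℝ×ℝ) := by
        simp only [Prod.smul_mk, Prod.mk_add_mk, smul_eq_mul, Prod.mk.injEq]
        rw [ht]
        constructor <;> (field_simp; ring)
      rwa [hcombo] at hmem'
    have htop : ((x, (r1+r3)*x - K*(r1*r3)) : ℝ×ℝ) ∈
        convexHull ℝ {(K*r1, K*r1^2), (K*r2, K*r2^2), (K*r3, K*r3^2)} := by
      have hmem' := hconv hV1 hV3 (by linarith : (0:ℝ) ≤ 1 - s) hs0 (by ring)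
      have hcombo : (1-s) • ((K*r1, K*r1^2):ℝ×ℝ) + s • ((K*r3, K*r3^2):ℝ×ℝ)
          = ((x, (r1+r3)*x - K*(r1*r3)) : ℝ×ℝ) := by
        simp only [Prod.smul_mk, Prod.mk_add_mk, smul_eq_mul, Prod.mk.injEq]
        rw [hs]
        constructor <;> (field_simp; ring)
      rwa [hcombo] at hmem'
    -- now interpolate vertically
    have hgap : 0 < ((r1+r3)*x - K*(r1*r3)) - ((r1+r2)*x - K*(r1*r2)) ∨
        y = (r1+r2)*x - K*(r1*r2) := by
      rcases eq_or_lt_of_le hy1 with h' | h'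
      · exact Or.inr h'.symm
      · left; linarith
    rcases lt_or_eq_of_le (le_trans hy1 hy2) with hgap | hgap
    · have hgappos : 0 < ((r1+r3)*x - K*(r1*r3)) - ((r1+r2)*x - K*(r1*r2)) := by linarith
      set u : ℝ := (y - ((r1+r2)*x - K*(r1*r2)))/(((r1+r3)*x - K*(r1*r3)) - ((r1+r2)*x - K*(r1*r2))) with hu
      have hu0 : 0 ≤ u := div_nonneg (by linarith) hgappos.le
      have hu1 : u ≤ 1 := (div_le_one hgappos).mpr (by linarith)
      have hmem' := hconv hbot htop (by linarith : (0:ℝ) ≤ 1 - u) hu0 (by ring)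
      have hcombo : (1-u) • ((x, (r1+r2)*x - K*(r1*r2)):ℝ×ℝ) + u • ((x, (r1+r3)*x - K*(r1*r3)):ℝ×ℝ)
          = ((x, y) : ℝ×ℝ) := by
        simp only [Prod.smul_mk, Prod.mk_add_mk, smul_eq_mul, Prod.mk.injEq]
        rw [hu]
        constructor
        · ring
        · linear_combination div_mul_cancel₀ (y - ((r1+r2)*x - K*(r1*r2))) hgappos.ne'
      rwa [hcombo] at hmem'
    · have : y = (r1+r2)*x - K*(r1*r2) := by linarith
      rw [this]; exact hbot

theorem simplest_cubic_vertical_slice_count (a k n : ℤ) (ha : 34 ≤ a)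
    (hk1 : 1 ≤ k) (hka : k ≤ a) (ρ₁ ρ₂ ρ₃ : ℝ)
    (h12 : ρ₁ < ρ₂) (h23 : ρ₂ < ρ₃)
    (h1 : ρ₁^3 - a*ρ₁^2 - (a+3)*ρ₁ - 1 = 0)
    (h2 : ρ₂^3 - a*ρ₂^2 - (a+3)*ρ₂ - 1 = 0)
    (h3 : ρ₃^3 - a*ρ₃^2 - (a+3)*ρ₃ - 1 = 0)
    (T : Set (ℝ × ℝ))
    (hT : T = convexHull ℝ {(ρ₁, ρ₁^2), (ρ₂, ρ₂^2), (ρ₃, ρ₃^2)})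
    (hn1 : -k ≤ n) (hn2 : n ≤ -1) :
    (Set.ncard {p : ℤ × ℤ | ((p.1 : ℝ), (p.2 : ℝ)) ∈ (fun x => (k : ℝ) • x) '' T ∧ p.1 = n} : ℤ) =
      ⌊(ρ₁+ρ₃)*(n:ℝ) - k*(ρ₁*ρ₃)⌋ - ⌊(ρ₁+ρ₂)*(n:ℝ) - k*(ρ₁*ρ₂)⌋ := by
  have haR : (34:ℝ) ≤ (a:ℝ) := by exact_mod_cast ha
  have hkR : (1:ℝ) ≤ (k:ℝ) := by exact_mod_cast hk1
  have hkaR : (k:ℝ) ≤ (a:ℝ) := by exact_mod_cast hka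
  have hnR1 : (-(k:ℝ)) ≤ (n:ℝ) := by exact_mod_cast hn1
  have hnR2 : (n:ℝ) ≤ -1 := by exact_mod_cast hn2
  have d12 : ρ₁ - ρ₂ ≠ 0 := by linarith
  have d23 : ρ₂ - ρ₃ ≠ 0 := by linarith
  have d13 : ρ₁ - ρ₃ ≠ 0 := by linarith
  -- Vieta
  have eq12 : ρ₁^2 + ρ₁*ρ₂ + ρ₂^2 - a*(ρ₁+ρ₂) - (a+3) = 0 := by
    have h' : (ρ₁ - ρ₂) * (ρ₁^2 + ρ₁*ρ₂ + ρ₂^2 - a*(ρ₁+ρ₂) - (a+3)) = 0 := by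
      linear_combination h1 - h2
    rcases mul_eq_zero.mp h' with h'' | h''
    · exact absurd h'' d12
    · exact h''
  have eq23 : ρ₂^2 + ρ₂*ρ₃ + ρ₃^2 - a*(ρ₂+ρ₃) - (a+3) = 0 := by
    have h' : (ρ₂ - ρ₃) * (ρ₂^2 + ρ₂*ρ₃ + ρ₃^2 - a*(ρ₂+ρ₃) - (a+3)) = 0 := by
      linear_combination h2 - h3
    rcases mul_eq_zero.mp h' with h'' | h''
    · exact absurd h'' d23
    · exact h''
  have hs : ρ₁ + ρ₂ + ρ₃ = a := by
    have h' : (ρ₁ - ρ₃) * (ρ₁ + ρ₂ + ρ₃ - a) = 0 := by linear_combination eq12 - eq23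
    rcases mul_eq_zero.mp h' with h'' | h''
    · exact absurd h'' d13
    · linarith
  have he2 : ρ₁*ρ₂ + ρ₁*ρ₃ + ρ₂*ρ₃ = -(a+3) := by
    linear_combination (ρ₁ + ρ₂) * hs - eq12
  have he3 : ρ₁*ρ₂*ρ₃ = 1 := by
    linear_combination h1 - ρ₁^2*hs + ρ₁*he2
  -- bounds
  have hρ₃pos : (11:ℝ) < ρ₃ := by linarith
  have hρ₂neg : ρ₂ < 0 := by
    by_contra h'
    push_neg at h'
    rcases le_or_gt ρ₁ 0 with h1' | h1'
    · have hq : ρ₁*ρ₂ ≤ 0 := mul_nonpos_of_nonpos_of_nonneg h1' h'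
      have : ρ₁*ρ₂*ρ₃ ≤ 0 := mul_nonpos_of_nonpos_of_nonneg hq (by linarith)
      linarith [he3]
    · have p12 : 0 < ρ₁*ρ₂ := mul_pos h1' (lt_trans h1' h12)
      have p13 : 0 < ρ₁*ρ₃ := mul_pos h1' (by linarith)
      have p23 : 0 < ρ₂*ρ₃ := mul_pos (lt_trans h1' h12) (by linarith)
      linarith [he2]
  have hρ₁neg : ρ₁ < 0 := by linarith
  have hf1 : (-1-ρ₁)*(-1-ρ₂)*(-1-ρ₃) = 1 := by linear_combination -hs - he2 - he3
  have hρ₁lt : ρ₁ < -1 := by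
    by_contra h'
    push_neg at h'
    have q1 : -1 - ρ₁ ≤ 0 := by linarith
    have q2 : -1 - ρ₂ < 0 := by linarith
    have q3 : -1 - ρ₃ < 0 := by linarith
    have hq : 0 ≤ (-1-ρ₁)*(-1-ρ₂) := mul_nonneg_of_nonpos_of_nonpos q1 q2.le
    have : (-1-ρ₁)*(-1-ρ₂)*(-1-ρ₃) ≤ 0 := mul_nonpos_of_nonneg_of_nonpos hq q3.le
    linarith
  have hρ₂gt : -1 < (a:ℝ)*ρ₂ := by
    by_contra h'
    push_neg at h'
    have hf : (-1 - (a:ℝ)*ρ₁)*(-1-(a:ℝ)*ρ₂)*(-1-(a:ℝ)*ρ₃) = 2*(a:ℝ)^2 - 1 := by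
      linear_combination (-(a:ℝ))*hs - (a:ℝ)^2*he2 - (a:ℝ)^3*he3
    have q1 : 0 < -1 - (a:ℝ)*ρ₁ := by
      have := mul_lt_mul_of_pos_left hρ₁lt (show (0:ℝ) < (a:ℝ) by linarith)
      linarith
    have q2 : 0 ≤ -1 - (a:ℝ)*ρ₂ := by linarith
    have q3 : -1 - (a:ℝ)*ρ₃ < 0 := by
      have := mul_pos (show (0:ℝ) < (a:ℝ) by linarith) (show (0:ℝ) < ρ₃ by linarith)
      linarith
    have hq : 0 ≤ (-1-(a:ℝ)*ρ₁)*(-1-(a:ℝ)*ρ₂) := mul_nonneg q1.le q2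
    have : (-1-(a:ℝ)*ρ₁)*(-1-(a:ℝ)*ρ₂)*(-1-(a:ℝ)*ρ₃) ≤ 0 :=
      mul_nonpos_of_nonneg_of_nonpos hq q3.le
    nlinarith
  have hkρ₂ : -1 < (k:ℝ)*ρ₂ := by
    have := mul_le_mul_of_nonpos_right hkaR hρ₂neg.le
    linarith
  have hK0 : (0:ℝ) < (k:ℝ) := by linarith
  -- slice bounds for x = n
  have hx1 : (k:ℝ)*ρ₁ ≤ (n:ℝ) := by
    have := mul_lt_mul_of_pos_left hρ₁lt hK0
    linarith
  have hx2 : (n:ℝ) ≤ (k:ℝ)*ρ₂ := by linarith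
  set α : ℝ := (ρ₁+ρ₂)*(n:ℝ) - k*(ρ₁*ρ₂) with hα
  set β : ℝ := (ρ₁+ρ₃)*(n:ℝ) - k*(ρ₁*ρ₃) with hβ
  have hαβ : α ≤ β := by
    have hexp : β - α = (ρ₃ - ρ₂)*((n:ℝ) - (k:ℝ)*ρ₁) := by rw [hα, hβ]; ring
    have := mul_nonneg (by linarith : (0:ℝ) ≤ ρ₃ - ρ₂) (by linarith : (0:ℝ) ≤ (n:ℝ) - (k:ℝ)*ρ₁)
    linarith
  -- the image set
  have himg : (fun x => (k:ℝ) • x) '' T =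
      convexHull ℝ {((k:ℝ)*ρ₁, (k:ℝ)*ρ₁^2), ((k:ℝ)*ρ₂, (k:ℝ)*ρ₂^2), ((k:ℝ)*ρ₃, (k:ℝ)*ρ₃^2)} := by
    rw [hT, Set.image_smul, ← convexHull_smul]
    congr 1
    simp [Set.smul_set_insert, Set.smul_set_singleton, Prod.smul_mk, smul_eq_mul]
  -- non-integrality of α
  have nonint : ∀ m : ℤ, (m:ℝ) ≠ α := by
    intro m hm
    rw [hα] at hm
    refine no_int_quad' a ρ₃ h3 (-n) (a*n - m) (-k) (by omega) ?_
    push_cast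
    linear_combination (-ρ₃) * hm + (-(n:ℝ)*ρ₃) * hs + (k:ℝ) * he3
  -- characterize the set
  have hchar : {p : ℤ × ℤ | ((p.1 : ℝ), (p.2 : ℝ)) ∈ (fun x => (k : ℝ) • x) '' T ∧ p.1 = n}
      = (fun y : ℤ => (n, y)) '' ↑(Finset.Icc (⌊α⌋+1) ⌊β⌋) := by
    ext ⟨p1, p2⟩
    simp only [Set.mem_setOf_eq]
    constructor
    · rintro ⟨hmem, hp1⟩
      rw [himg, hp1] at hmem
      have hb := (slice_mem' ρ₁ ρ₂ ρ₃ (k:ℝ) (n:ℝ) (p2:ℝ) h12 h23 hK0 hx1 hx2).mp hmem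
      refine ⟨p2, ?_, by rw [hp1]⟩
      simp only [Finset.coe_Icc, Set.mem_Icc]
      constructor
      · have hlt : α < (p2:ℝ) := lt_of_le_of_ne hb.1 (fun h => nonint p2 h.symm)
        have := Int.floor_lt.mpr hlt
        omega
      · exact Int.le_floor.mpr hb.2
    · rintro ⟨y, hy, heq⟩
      simp only [Finset.coe_Icc, Set.mem_Icc] at hy
      obtain ⟨rfl, rfl⟩ : n = p1 ∧ y = p2 := by
        simpa [Prod.ext_iff] using heq
      refine ⟨?_, rfl⟩
      rw [himg]
      refine (slice_mem' ρ₁ ρ₂ ρ₃ (k:ℝ) (n:ℝ) (y:ℝ) h12 h23 hK0 hx1 hx2).mpr ⟨?_, ?_⟩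
      · have hlt : ⌊α⌋ < y := by omega
        exact (Int.floor_lt.mp hlt).le
      · exact Int.le_floor.mp hy.2
  rw [hchar]
  have hinj : Function.Injective (fun y : ℤ => ((n, y) : ℤ × ℤ)) := by
    intro y1 y2 h
    simpa using h
  rw [Set.ncard_image_of_injective _ hinj, Set.ncard_coe_finset, Int.card_Icc]
  have hfl : ⌊α⌋ ≤ ⌊β⌋ := Int.floor_le_floor hαβ
  have : (⌊β⌋ + 1 - (⌊α⌋ + 1)) = ⌊β⌋ - ⌊α⌋ := by ring
  rw [this]
  omega
end

section
/- For every integer a ≥ 34, the largest root ρ₃ of f_a satisfies the following: writing δ = ρ₃ - a - 1, one has δ(a+2+δ) > 2 and (1+δ)/(δ(a+2+δ) - 2) > a. -/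
theorem simplest_cubic_delta_inequalities (a : ℤ) (ha : 34 ≤ a) (ρ₃ : ℝ)
    (hroot : ρ₃^3 - a*ρ₃^2 - (a+3)*ρ₃ - 1 = 0)
    (hmax : ∀ x : ℝ, x^3 - a*x^2 - (a+3)*x - 1 = 0 → x ≤ ρ₃) :
    (ρ₃ - a - 1) * ((a:ℝ) + 2 + (ρ₃ - a - 1)) > 2 ∧
    (1 + (ρ₃ - a - 1)) / ((ρ₃ - a - 1) * ((a:ℝ) + 2 + (ρ₃ - a - 1)) - 2) > a := by
  have ha' : (34:ℝ) ≤ a := by exact_mod_cast ha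
  set g : ℝ → ℝ := fun x => x^3 - a*x^2 - (a+3)*x - 1 with hg
  have hcont : ContinuousOn g (Set.Icc ((a:ℝ)+1) ((a:ℝ)+2)) := by
    apply Continuous.continuousOn
    fun_prop
  have h1 : g ((a:ℝ)+1) = -(2*a+3) := by simp only [hg]; ring
  have h2 : g ((a:ℝ)+2) = ((a:ℝ)+2)*((a:ℝ)+1) - 1 := by simp only [hg]; ring
  have hmem : (0:ℝ) ∈ Set.Icc (g ((a:ℝ)+1)) (g ((a:ℝ)+2)) := by
    rw [Set.mem_Icc, h1, h2]; constructor
    · linarith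
    · nlinarith
  obtain ⟨c, hc, hgc⟩ := intermediate_value_Icc (by linarith : (a:ℝ)+1 ≤ (a:ℝ)+2) hcont hmem
  have hgc' : c^3 - a*c^2 - (a+3)*c - 1 = 0 := hgc
  have hc1 : (a:ℝ)+1 < c := by
    rcases lt_or_eq_of_le hc.1 with h | h
    · exact h
    · exfalso
      have h0 : g ((a:ℝ)+1) = 0 := h ▸ hgc
      rw [h1] at h0; linarith
  have hρ : (a:ℝ)+1 < ρ₃ := lt_of_lt_of_le hc1 (hmax c hgc')
  have hρpos : (0:ℝ) < ρ₃ := by linarith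
  have key : ρ₃ * ((ρ₃ - a - 1) * ((a:ℝ) + 2 + (ρ₃ - a - 1)) - 2) = 1 := by
    linear_combination hroot
  have hE : 0 < (ρ₃ - a - 1) * ((a:ℝ) + 2 + (ρ₃ - a - 1)) - 2 := by
    nlinarith [key, hρpos]
  constructor
  · linarith
  · rw [gt_iff_lt, lt_div_iff₀ hE]
    nlinarith [key, hρ, ha', hE]
end
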